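/- arXiv:1701.07258 — 10 statements merged into one kernel-verified Lean document; each statement's English description precedes it below -/
import Mathlib

section
/- Let a, b, c, d, x, y, z, w be real numbers. Let P be the 3×4 real matrix whose rows are (−y, x, w, −z), (−z, −w, x, y), (−w, z, −y, x), and let D be the 4×4 diagonal matrix diag(a, b, c, d). Then det(P · D · Pᵀ) = (x² + y² + z² + w²)² · (b·c·d·x² + a·c·d·y² + a·b·d·z² + a·b·c·w²). -/
set_option maxHeartbeats 1000000 in
/-- Determinant identity for `P * D * Pᵀ` where `P` has the three rows
`(−y, x, w, −z)`, `(−z, −w, x, y)`, `(−w, z, −y, x)` and `D = diag(a,b,c,d)`. -/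
theorem stmt_0 (a b c d x y z w : ℝ) :
    (((!![-y, x, w, -z; -z, -w, x, y; -w, z, -y, x] : Matrix (Fin 3) (Fin 4) ℝ) *
        Matrix.diagonal ![a, b, c, d] *
        (!![-y, x, w, -z; -z, -w, x, y; -w, z, -y, x] : Matrix (Fin 3) (Fin 4) ℝ).transpose).det)
      = (x ^ 2 + y ^ 2 + z ^ 2 + w ^ 2) ^ 2 *
        (b * c * d * x ^ 2 + a * c * d * y ^ 2 + a * b * d * z ^ 2 + a * b * c * w ^ 2) := by
  have hD : (Matrix.diagonal ![a, b, c, d] : Matrix (Fin 4) (Fin 4) ℝ) =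
      !![a, 0, 0, 0; 0, b, 0, 0; 0, 0, c, 0; 0, 0, 0, d] := by
    ext i j
    fin_cases i <;> fin_cases j <;> simp [Matrix.diagonal, Matrix.vecHead, Matrix.vecTail]
  rw [hD]
  simp only [Matrix.det_fin_three, Matrix.mul_apply, Matrix.transpose_apply,
    Fin.sum_univ_four, Matrix.cons_val', Matrix.cons_val_zero, Matrix.cons_val_one,
    Matrix.head_cons, Matrix.empty_val', Matrix.cons_val_fin_one, Matrix.head_fin_const,
    Matrix.cons_val_two, Matrix.tail_cons, Matrix.cons_val_three, Matrix.of_apply]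
  ring
end

section
/- Let μ ∈ (0,1) and let c < −1 − 2√(μ(1−μ)). For all real λ, ν, p_λ, p_ν, if 2p_λ² − 2cosh λ − c·cosh²λ + 2p_ν² + 2(1−2μ)·cos ν + c·cos²ν = 0, then 4·sinh²λ·(1 + c·cosh λ)² + 4·sin²ν·(1 − 2μ + c·cos ν)² + 16·p_λ² + 16·p_ν² > 0; that is, the four quantities sinh λ·(1 + c·cosh λ), sin ν·(1 − 2μ + c·cos ν), p_λ, p_ν cannot all vanish on the zero level set. -/
/-- On the zero level set of the regularized Hamiltonian in doubly-covered elliptic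
coordinates, the four partial derivatives cannot all vanish, for energies below the
critical Jacobi energy. -/
theorem stmt_1 (μ c : ℝ) (hμ : μ ∈ Set.Ioo (0 : ℝ) 1)
    (hc : c < -1 - 2 * Real.sqrt (μ * (1 - μ)))
    (lam ν plam pν : ℝ)
    (hQ : 2 * plam ^ 2 - 2 * Real.cosh lam - c * (Real.cosh lam) ^ 2
        + 2 * pν ^ 2 + 2 * (1 - 2 * μ) * Real.cos ν + c * (Real.cos ν) ^ 2 = 0) :
    4 * (Real.sinh lam) ^ 2 * (1 + c * Real.cosh lam) ^ 2
      + 4 * (Real.sin ν) ^ 2 * (1 - 2 * μ + c * Real.cos ν) ^ 2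
      + 16 * plam ^ 2 + 16 * pν ^ 2 > 0 := by
  obtain ⟨hμ0, hμ1⟩ := hμ
  set s := Real.sqrt (μ * (1 - μ)) with hs
  have hs0 : 0 ≤ s := Real.sqrt_nonneg _
  have hspos : 0 < s := Real.sqrt_pos.mpr (by nlinarith)
  have hs2 : s ^ 2 = μ * (1 - μ) := by
    rw [hs, sq, Real.mul_self_sqrt]; nlinarith
  have hc1 : c < -1 := by nlinarith
  by_contra h
  push_neg at h
  have t1 : 0 ≤ Real.sinh lam ^ 2 * (1 + c * Real.cosh lam) ^ 2 := by positivity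
  have t2 : 0 ≤ Real.sin ν ^ 2 * (1 - 2 * μ + c * Real.cos ν) ^ 2 := by positivity
  have tp : 0 ≤ plam ^ 2 := sq_nonneg _
  have tq : 0 ≤ pν ^ 2 := sq_nonneg _
  have h1 : plam = 0 := by
    have : plam ^ 2 = 0 := le_antisymm (by linarith) tp
    exact pow_eq_zero_iff (by norm_num) |>.mp this
  have h2 : pν = 0 := by
    have : pν ^ 2 = 0 := le_antisymm (by linarith) tq
    exact pow_eq_zero_iff (by norm_num) |>.mp this
  have h3 : Real.sinh lam * (1 + c * Real.cosh lam) = 0 := by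
    have e : (Real.sinh lam * (1 + c * Real.cosh lam)) ^ 2 = 0 := by
      rw [mul_pow]; exact le_antisymm (by linarith) t1
    exact pow_eq_zero_iff (by norm_num) |>.mp e
  have h4 : Real.sin ν * (1 - 2 * μ + c * Real.cos ν) = 0 := by
    have e : (Real.sin ν * (1 - 2 * μ + c * Real.cos ν)) ^ 2 = 0 := by
      rw [mul_pow]; exact le_antisymm (by linarith) t2
    exact pow_eq_zero_iff (by norm_num) |>.mp e
  have hch : 1 ≤ Real.cosh lam := Real.one_le_cosh lam
  have hneg : 1 + c * Real.cosh lam < 0 := by nlinarith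
  have hsl : Real.sinh lam = 0 := by
    rcases mul_eq_zero.mp h3 with h' | h'
    · exact h'
    · linarith
  have hch1 : Real.cosh lam = 1 := by rw [Real.sinh_eq_zero.mp hsl, Real.cosh_zero]
  rw [h1, h2, hch1] at hQ
  have hpyth : Real.sin ν ^ 2 + Real.cos ν ^ 2 = 1 := Real.sin_sq_add_cos_sq ν
  rcases mul_eq_zero.mp h4 with h5 | h5
  · -- sin ν = 0, cos ν = ±1
    have hcsq : Real.cos ν ^ 2 = 1 := by
      rw [h5] at hpyth; linarith [hpyth, sq_nonneg (Real.sin ν)]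
    have h6 : Real.cos ν = 1 ∨ Real.cos ν = -1 := by
      have e : (Real.cos ν - 1) * (Real.cos ν + 1) = 0 := by linear_combination hcsq
      rcases mul_eq_zero.mp e with h' | h'
      · left; linarith
      · right; linarith
    rcases h6 with h6 | h6 <;> rw [h6] at hQ <;> nlinarith
  · -- 1 - 2μ + c cos ν = 0
    have hcc : c * Real.cos ν = 2 * μ - 1 := by linarith
    have key : c ^ 2 + 2 * c + (1 - 2 * μ) ^ 2 = 0 := by
      linear_combination (-c) * hQ + (c * Real.cos ν + 1 - 2 * μ) * hcc
    have e : (c + 1) ^ 2 = (2 * s) ^ 2 := by linear_combination key - 4 * hs2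
    have h7 : (2 * s) * (2 * s) < (-(c + 1)) * (-(c + 1)) :=
      mul_self_lt_mul_self (by positivity) (by linarith)
    have e2 : (2 * s) * (2 * s) = (-(c + 1)) * (-(c + 1)) := by linear_combination -e
    exact absurd e2 h7.ne
end

section
/- Let μ ∈ (0,1) and define η(c) := c⁴ + 2c³ + (9/8)·(1−2μ)²·c² + ((1−2μ)²/4)·c + (5/256)·(1−2μ)⁴ and c_E'' := −1 − √(−28μ² + 28μ + 9)/4. Then η(c_E'') = (9/32)·(1−2μ)²·(√(−28μ² + 28μ + 9) − 4μ² + 4μ + 3); in particular η(c_E'') > 0 whenever μ ≠ 1/2. -/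
/-- The value of the quartic `η` at `c_E'' = −1 − √(−28μ² + 28μ + 9)/4`, together with
its positivity when `μ ≠ 1/2`. -/
theorem stmt_6 (μ : ℝ) (hμ : μ ∈ Set.Ioo (0 : ℝ) 1) :
    (fun c : ℝ => c ^ 4 + 2 * c ^ 3 + (9 / 8) * (1 - 2 * μ) ^ 2 * c ^ 2
        + ((1 - 2 * μ) ^ 2 / 4) * c + (5 / 256) * (1 - 2 * μ) ^ 4)
      (-1 - Real.sqrt (-28 * μ ^ 2 + 28 * μ + 9) / 4)
      = (9 / 32) * (1 - 2 * μ) ^ 2 *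
          (Real.sqrt (-28 * μ ^ 2 + 28 * μ + 9) - 4 * μ ^ 2 + 4 * μ + 3) ∧
    (μ ≠ 1 / 2 →
      (fun c : ℝ => c ^ 4 + 2 * c ^ 3 + (9 / 8) * (1 - 2 * μ) ^ 2 * c ^ 2
          + ((1 - 2 * μ) ^ 2 / 4) * c + (5 / 256) * (1 - 2 * μ) ^ 4)
        (-1 - Real.sqrt (-28 * μ ^ 2 + 28 * μ + 9) / 4) > 0) := by
  obtain ⟨h0, h1⟩ := hμ
  have hD : (0:ℝ) < -28 * μ ^ 2 + 28 * μ + 9 := by nlinarith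
  set s := Real.sqrt (-28 * μ ^ 2 + 28 * μ + 9) with hs
  have hs2 : s ^ 2 = -28 * μ ^ 2 + 28 * μ + 9 := Real.sq_sqrt hD.le
  have hsnn : 0 ≤ s := Real.sqrt_nonneg _
  have heq : (fun c : ℝ => c ^ 4 + 2 * c ^ 3 + (9 / 8) * (1 - 2 * μ) ^ 2 * c ^ 2
        + ((1 - 2 * μ) ^ 2 / 4) * c + (5 / 256) * (1 - 2 * μ) ^ 4)
      (-1 - s / 4)
      = (9 / 32) * (1 - 2 * μ) ^ 2 * (s - 4 * μ ^ 2 + 4 * μ + 3) := by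
    simp only
    nlinarith [hs2, sq_nonneg s, sq_nonneg (1 - 2*μ)]
  refine ⟨heq, fun hne => ?_⟩
  rw [heq]
  have h12 : (1 - 2 * μ) ^ 2 > 0 := by
    have : 1 - 2 * μ ≠ 0 := fun h => hne (by linarith)
    positivity
  have : -4 * μ ^ 2 + 4 * μ + 3 > 0 := by nlinarith
  nlinarith
end

section
/- Let μ ∈ (0, 1/2), let c_J := −1 − 2√(μ(1−μ)), let c_E'' := −1 − √(−28μ² + 28μ + 9)/4, and define η(c) := c⁴ + 2c³ + (9/8)·(1−2μ)²·c² + ((1−2μ)²/4)·c + (5/256)·(1−2μ)⁴. Then η is strictly decreasing on (−∞, c_J], c_E'' < c_J, and there exists c₀ ∈ (c_E'', c_J) such that for every c ≤ c_J one has η(c) > 0 if and only if c < c₀. -/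
/-- For `μ ∈ (0, 1/2)`, the quartic `η` is strictly decreasing on `(−∞, c_J]`,
`c_E'' < c_J`, and there is a threshold `c₀ ∈ (c_E'', c_J)` such that for `c ≤ c_J`,
`η(c) > 0` if and only if `c < c₀`. -/
theorem stmt_7 (μ : ℝ) (hμ : μ ∈ Set.Ioo (0 : ℝ) (1 / 2)) :
    StrictAntiOn
      (fun c : ℝ => c ^ 4 + 2 * c ^ 3 + (9 / 8) * (1 - 2 * μ) ^ 2 * c ^ 2
        + ((1 - 2 * μ) ^ 2 / 4) * c + (5 / 256) * (1 - 2 * μ) ^ 4)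
      (Set.Iic (-1 - 2 * Real.sqrt (μ * (1 - μ)))) ∧
    -1 - Real.sqrt (-28 * μ ^ 2 + 28 * μ + 9) / 4 < -1 - 2 * Real.sqrt (μ * (1 - μ)) ∧
    ∃ c₀ ∈ Set.Ioo (-1 - Real.sqrt (-28 * μ ^ 2 + 28 * μ + 9) / 4)
        (-1 - 2 * Real.sqrt (μ * (1 - μ))),
      ∀ c ≤ -1 - 2 * Real.sqrt (μ * (1 - μ)),
        (c ^ 4 + 2 * c ^ 3 + (9 / 8) * (1 - 2 * μ) ^ 2 * c ^ 2
          + ((1 - 2 * μ) ^ 2 / 4) * c + (5 / 256) * (1 - 2 * μ) ^ 4 > 0 ↔ c < c₀) := by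
  obtain ⟨hμ0, hμ2⟩ := hμ
  set s := Real.sqrt (μ * (1 - μ)) with hs_def
  set t := Real.sqrt (-28 * μ ^ 2 + 28 * μ + 9) with ht_def
  set f := fun c : ℝ => c ^ 4 + 2 * c ^ 3 + (9 / 8) * (1 - 2 * μ) ^ 2 * c ^ 2
        + ((1 - 2 * μ) ^ 2 / 4) * c + (5 / 256) * (1 - 2 * μ) ^ 4 with hf
  have hsp : 0 < μ * (1 - μ) := by nlinarith
  have hs : 0 < s := Real.sqrt_pos.mpr hsp
  have hs2 : s ^ 2 = μ * (1 - μ) := Real.sq_sqrt hsp.le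
  have hshalf : s < 1 / 2 := by
    nlinarith [hs2, hs, mul_pos (show (0:ℝ) < 1/2 - μ by linarith) (show (0:ℝ) < 1/2 - μ by linarith)]
  have hA : (1 - 2 * μ) ^ 2 = 1 - 4 * s ^ 2 := by rw [hs2]; ring
  have hA4 : (1 - 2 * μ) ^ 4 = (1 - 4 * s ^ 2) ^ 2 := by
    rw [show (1 - 2 * μ) ^ 4 = ((1 - 2 * μ) ^ 2) ^ 2 by ring, hA]
  have hApos : 0 < 1 - 4 * s ^ 2 := by nlinarith
  have hDpos : 0 < -28 * μ ^ 2 + 28 * μ + 9 := by nlinarith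
  have ht2 : t ^ 2 = 9 + 28 * s ^ 2 := by
    rw [ht_def, Real.sq_sqrt hDpos.le, hs2]; ring
  have ht0 : 0 ≤ t := Real.sqrt_nonneg _
  clear_value s t f
  -- Part 2 : c_E'' < c_J
  have hlt : -1 - t / 4 < -1 - 2 * s := by
    have h1 : (8 * s) ^ 2 < t ^ 2 := by nlinarith
    have h2 : 8 * s < t := lt_of_pow_lt_pow_left₀ 2 ht0 h1
    linarith
  -- derivative of f
  have hderiv : ∀ x : ℝ, HasDerivAt f
      (4 * x ^ 3 + 6 * x ^ 2 + (9 / 4) * (1 - 2 * μ) ^ 2 * x + (1 - 2 * μ) ^ 2 / 4) x := by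
    intro x
    have h := ((((hasDerivAt_pow 4 x).add ((hasDerivAt_pow 3 x).const_mul 2)).add
        ((hasDerivAt_pow 2 x).const_mul ((9 : ℝ) / 8 * (1 - 2 * μ) ^ 2))).add
        ((hasDerivAt_id x).const_mul ((1 - 2 * μ) ^ 2 / 4))).add_const
        ((5 : ℝ) / 256 * (1 - 2 * μ) ^ 4)
    have hval : (4 * x ^ 3 + 6 * x ^ 2 + (9 / 4) * (1 - 2 * μ) ^ 2 * x + (1 - 2 * μ) ^ 2 / 4 : ℝ)
        = ((4 : ℕ) : ℝ) * x ^ (4 - 1) + 2 * (((3 : ℕ) : ℝ) * x ^ (3 - 1))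
          + 9 / 8 * (1 - 2 * μ) ^ 2 * (((2 : ℕ) : ℝ) * x ^ (2 - 1)) + (1 - 2 * μ) ^ 2 / 4 * 1 := by
      push_cast; ring
    rw [hf, hval]
    exact h
  have hcont : Continuous f := by
    rw [hf]; fun_prop
  -- strict antitonicity
  have hanti : StrictAntiOn f (Set.Iic (-1 - 2 * s)) := by
    apply strictAntiOn_of_deriv_neg (convex_Iic _) hcont.continuousOn
    intro x hx
    rw [interior_Iic] at hx
    rw [(hderiv x).deriv, hA]
    have hx' : x < -1 - 2 * s := hx
    have hu : 0 < -1 - 2 * s - x := by linarith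
    set u := -1 - 2 * s - x with hu_def
    have key : 4 * x ^ 3 + 6 * x ^ 2 + 9 / 4 * (1 - 4 * s ^ 2) * x + (1 - 4 * s ^ 2) / 4
        = -((9/4) * u + 6 * u ^ 2 + 4 * u ^ 3 + (9/2) * s + 24 * s * u + 24 * s * u ^ 2
            + 16 * s ^ 2 + 39 * s ^ 2 * u + 14 * s ^ 3) := by
      rw [hu_def]; ring
    rw [key]
    have h1 : 0 ≤ s * u := by positivity
    have h2 : 0 ≤ s * u ^ 2 := by positivity
    have h3 : 0 ≤ s ^ 2 * u := by positivity
    have h4 : 0 ≤ u ^ 2 := by positivity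
    have h5 : 0 ≤ u ^ 3 := by positivity
    have h6 : 0 < s ^ 3 := by positivity
    have h7 : 0 < s ^ 2 := by positivity
    nlinarith [hu.le, hs]
  -- values at the endpoints
  have hfJ : f (-1 - 2 * s) = -27/256 * (1 - 4 * s ^ 2) ^ 2 := by
    rw [hf]; beta_reduce; rw [hA, hA4]; ring
  have hfE : f (-1 - t / 4) = (9/32) * (1 - 4 * s ^ 2) * (3 + 4 * s ^ 2 + t) := by
    rw [hf]; beta_reduce; rw [hA, hA4]
    linear_combination (t ^ 2 / 256 + t / 32 + 27 / 256 - 11 * s ^ 2 / 64) * ht2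
  have hfJneg : f (-1 - 2 * s) < 0 := by rw [hfJ]; have h := pow_pos hApos 2; linarith
  have hfEpos : 0 < f (-1 - t / 4) := by
    rw [hfE]
    have : 0 < 3 + 4 * s ^ 2 + t := by positivity
    positivity
  -- IVT
  obtain ⟨c₀, hc₀mem, hc₀⟩ :=
    intermediate_value_Ioo' hlt.le hcont.continuousOn
      (Set.mem_Ioo.mpr ⟨hfJneg, hfEpos⟩)
  refine ⟨hanti, hlt, c₀, hc₀mem, ?_⟩
  intro c hc
  have hcIic : c ∈ Set.Iic (-1 - 2 * s) := hc
  have hc₀Iic : c₀ ∈ Set.Iic (-1 - 2 * s) := le_of_lt hc₀mem.2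
  constructor
  · intro hfc
    have hfc' : 0 < f c := by rw [hf]; exact hfc
    by_contra h
    push_neg at h
    rcases eq_or_lt_of_le h with rfl | hlt'
    · rw [hc₀] at hfc'; exact lt_irrefl 0 hfc'
    · have h2 := hanti hc₀Iic hcIic hlt'
      rw [hc₀] at h2
      linarith
  · intro hcc
    have h2 := hanti hcIic hc₀Iic hcc
    rw [hc₀, hf] at h2
    exact h2
end

section
/- Let μ = 1/2 and let c < −2. Define A(x,y) := (c·x² + 2x − c·y²)·(2c·x² + x − c)·(2c·y² − c) − (1 − y²)·c²·y²·(2c·x² + x − c) − (x² − 1)·(1 + c·x)²·(2c·y² − c). Then A(x,y) > 0 for every x ∈ [1, (−1 − √(c² + 1))/c] and every y ∈ [−1, √(c² + 2c)/c]. -/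
private lemma crux_aux (k t : ℝ) (hk : 2 < k) (hk4 : k < 4) (ht : 0 ≤ t)
    (hu : 0 ≤ 2 - 2*(k-1)*t - k*t^2) :
    4*((k-1)+(4*k-1)*t+2*k*t^2)
      - (4-k)*(((k-1)+(4*k-1)*t+2*k*t^2)*(2 - 2*(k-1)*t - k*t^2)
               + (t^2+2*t)*(k*t+k-1)^2) > 0 := by
  nlinarith [mul_pos (sub_pos.2 hk) (sub_pos.2 hk), mul_nonneg ht ht, mul_nonneg (mul_nonneg ht ht) ht, mul_nonneg ht hu, mul_nonneg (mul_nonneg ht ht) hu, sq_nonneg (k*t-1), mul_pos (sub_pos.2 hk) (sub_pos.2 hk4), mul_nonneg (le_of_lt (sub_pos.2 hk)) ht, sq_nonneg (k-3), mul_nonneg (mul_nonneg ht ht) (le_of_lt (sub_pos.2 hk4))]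

private lemma quad_aux (k p M s : ℝ) (hk : 2 < k) (hp : 0 < p) (hM : 0 < M)
    (hs0 : 0 ≤ s) (hks : k*s ≤ 2) (hcrux : k < 4 → 4*p - (4-k)*M > 0) :
    0 < k*p*s^2 - 2*M*s + M := by
  have hkp : 0 < k*p := mul_pos (by linarith) hp
  rcases le_or_gt M (2*p) with hA | hB
  · have h1 : 0 < M*(k*p - M) := by nlinarith [mul_pos hM (mul_pos (show (0:ℝ) < k-2 by linarith) hp)]
    nlinarith [sq_nonneg (k*p*s - M), h1, hkp]
  · have h2M : 0 ≤ 2*M - p*(k*s+2) := by nlinarith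
    rcases lt_or_ge k 4 with h4 | h4
    · have hcx := hcrux h4
      nlinarith [mul_nonneg (show (0:ℝ) ≤ 2 - k*s by linarith) h2M]
    · nlinarith [mul_nonneg (show (0:ℝ) ≤ 2 - k*s by linarith) h2M,
        mul_nonneg (show (0:ℝ) ≤ k-4 by linarith) hM.le]

private lemma key_aux (c x s : ℝ) (hc : c < -2) (hx1 : 1 ≤ x)
    (hu : 0 ≤ c*x^2+2*x-c) (hs0 : 0 ≤ s) (hsc : -2 ≤ c*s) :
    0 < (c*x^2 + 2*x - c*(1-s)) * (2*c*x^2 + x - c) * (2*c*(1-s) - c)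
      - s * c^2 * (1-s) * (2*c*x^2 + x - c)
      - (x^2 - 1) * (1 + c*x)^2 * (2*c*(1-s) - c) := by
  have hc0 : (0:ℝ) < -c := by linarith
  have hp : 0 < -(2*c*x^2+x-c) := by
    nlinarith [mul_nonneg (sub_nonneg.2 hx1) (show (0:ℝ) ≤ -2*c*(x+1)-1 by nlinarith)]
  have hT : (-c-1)*(x-1) ≤ 1 := by nlinarith [sq_nonneg (x-1), mul_nonneg (sub_nonneg.2 hx1) (sub_nonneg.2 hx1)]
  have hM : 0 < -(2*c*x^2+x-c)*(c*x^2+2*x-c) + (x^2-1)*(1+c*x)^2 := by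
    nlinarith [mul_nonneg (sub_nonneg.2 hx1) (sub_nonneg.2 hx1),
      mul_nonneg (mul_nonneg (sub_nonneg.2 hx1) (sub_nonneg.2 hx1)) (le_of_lt hc0),
      mul_nonneg hu hp.le, sq_nonneg (1+c*x),
      mul_nonneg (sub_nonneg.2 hx1) hu]
  have hcrux : (-c) < 4 → 4*(-(2*c*x^2+x-c)) - (4-(-c))*(-(2*c*x^2+x-c)*(c*x^2+2*x-c) + (x^2-1)*(1+c*x)^2) > 0 := by
    intro h4
    have := crux_aux (-c) (x-1) (by linarith) h4 (by linarith)
      (by nlinarith)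
    nlinarith [this]
  have hG := quad_aux (-c) (-(2*c*x^2+x-c))
      (-(2*c*x^2+x-c)*(c*x^2+2*x-c) + (x^2-1)*(1+c*x)^2) s
      (by linarith) hp hM hs0 (by nlinarith) hcrux
  nlinarith [mul_pos hc0 hG]

/-- In the equal-mass case `μ = 1/2`, the convexity function `A` is positive on the
range of `(cosh λ, cos ν)` on the regularized Earth component, for `c < −2`. -/
theorem stmt_8 (c : ℝ) (hc : c < -2) (x y : ℝ)
    (hx : x ∈ Set.Icc (1 : ℝ) ((-1 - Real.sqrt (c ^ 2 + 1)) / c))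
    (hy : y ∈ Set.Icc (-1 : ℝ) (Real.sqrt (c ^ 2 + 2 * c) / c)) :
    (c * x ^ 2 + 2 * x - c * y ^ 2) * (2 * c * x ^ 2 + x - c) * (2 * c * y ^ 2 - c)
      - (1 - y ^ 2) * c ^ 2 * y ^ 2 * (2 * c * x ^ 2 + x - c)
      - (x ^ 2 - 1) * (1 + c * x) ^ 2 * (2 * c * y ^ 2 - c) > 0 := by
  obtain ⟨hx1, hx2⟩ := hx
  obtain ⟨hy1, hy2⟩ := hy
  have hc0 : c < 0 := by linarith
  -- x side
  have hxc : -1 - Real.sqrt (c^2+1) ≤ x * c := (le_div_iff_of_neg hc0).mp hx2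
  have hs1 : Real.sqrt (c^2+1) ^ 2 = c^2+1 := Real.sq_sqrt (by positivity)
  have hsn1 : 0 ≤ Real.sqrt (c^2+1) := Real.sqrt_nonneg _
  have hxneg : x * c + 1 ≤ 0 := by nlinarith
  have hsqx : (x*c+1)^2 ≤ c^2+1 := by nlinarith
  have hu : 0 ≤ c*x^2+2*x-c := by nlinarith
  -- y side
  have hyc : Real.sqrt (c^2+2*c) ≤ y * c := (le_div_iff_of_neg hc0).mp hy2
  have hs2 : Real.sqrt (c^2+2*c) ^ 2 = c^2+2*c := Real.sq_sqrt (by nlinarith)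
  have hsn2 : 0 ≤ Real.sqrt (c^2+2*c) := Real.sqrt_nonneg _
  have hyy : c^2+2*c ≤ (y*c)^2 := by nlinarith
  have hy0 : y ≤ 0 := by nlinarith
  have hy2' : y^2 ≤ 1 := by nlinarith
  have hsc : -2 ≤ c*(1-y^2) := by nlinarith
  have := key_aux c x (1-y^2) hc hx1 hu (by linarith) hsc
  nlinarith [this]
end

section
/- Let μ ∈ (0,1) and let c < −1 − 2√(μ(1−μ)). Define V : ℝ² → ℝ by V(x,y) := −c·(x² + y²) − μ·(x² + y²)/√(4x⁴ + 8x²y² − 4x² + 4y⁴ + 4y² + 1) − (1−μ)/2, which is smooth on ℝ² ∖ {(1/√2, 0), (−1/√2, 0)}. Set x₀ := √(1/2 − (1/2)·√(μ/(−c))). Then the set of points of ℝ² ∖ {(1/√2, 0), (−1/√2, 0)} at which the derivative of V vanishes is exactly {(0,0), (x₀, 0), (−x₀, 0)}. -/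
/-!
With `r = x² + y²` the radicand is `Q = (2r - 1)² + 8y²`, and the gradient of `V` is
`(2x (-c - μ (1 - 2x² + 6y²) / Q^{3/2}), 2y (-c - μ (1 - 6x² + 2y²) / Q^{3/2}))`.
Off the axes both brackets would vanish, and subtracting them gives `μ (x² + y²) = 0`.
On the `y`-axis `Q^{3/2} = (1 + 2y²)³`, so the second bracket is positive because `-c > 1 > μ`.
On the `x`-axis `Q^{3/2} = |1 - 2x²|³`, and the first bracket vanishes exactly when
`1 - 2x² = √(μ / -c)`, i.e. `x = ±x₀`.
-/

open Real ContinuousLinearMap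

theorem ContinuousLinearMap.smul_fst_add_smul_snd_eq_zero_iff {R : Type*} [CommSemiring R]
    [TopologicalSpace R] [ContinuousAdd R] [ContinuousMul R] (a b : R) :
    a • fst R R R + b • snd R R R = 0 ↔ a = 0 ∧ b = 0 := by
  refine ⟨fun h => ⟨by simpa using congr($h (1, 0)), by simpa using congr($h (0, 1))⟩, ?_⟩
  rintro ⟨rfl, rfl⟩
  simp

theorem mul_sq_mul_abs_eq_mul_iff_eq_sqrt {a b w : ℝ} (ha : 0 < a) (hb : 0 < b) :
    (w ≠ 0 ∧ a * (w ^ 2 * |w|) = b * w) ↔ w = √(b / a) := by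
  constructor
  · rintro ⟨hw, h⟩
    have hpos : 0 < w := by
      by_contra! hle
      have hneg : w < 0 := hle.lt_of_ne hw
      rw [abs_of_neg hneg] at h
      nlinarith [mul_pos ha (mul_pos (pow_pos (neg_pos.mpr hneg) 2) (neg_pos.mpr hneg)),
        mul_pos hb (neg_pos.mpr hneg)]
    rw [abs_of_pos hpos] at h
    have hsq : w ^ 2 = b / a := by
      rw [eq_div_iff ha.ne']
      exact mul_right_cancel₀ hpos.ne' (by linear_combination h)
    rw [← hsq, sqrt_sq hpos.le]
  · rintro rfl
    have hpos : 0 < √(b / a) := sqrt_pos.mpr (div_pos hb ha)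
    refine ⟨hpos.ne', ?_⟩
    rw [abs_of_pos hpos, sq_sqrt (div_pos hb ha).le]
    field_simp

lemma hasFDerivAt_fst_sq_add_snd_sq (x y : ℝ) :
    HasFDerivAt (fun q : ℝ × ℝ => q.1 ^ 2 + q.2 ^ 2)
      ((2 * x) • fst ℝ ℝ ℝ + (2 * y) • snd ℝ ℝ ℝ) (x, y) := by
  refine ((hasFDerivAt_fst.pow 2).add (hasFDerivAt_snd.pow 2)).congr_fderiv ?_
  ext <;> simp

namespace LeviCivita

noncomputable section

def radicand (x y : ℝ) : ℝ :=
  4 * x ^ 4 + 8 * x ^ 2 * y ^ 2 - 4 * x ^ 2 + 4 * y ^ 4 + 4 * y ^ 2 + 1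

def potential (μ c : ℝ) (q : ℝ × ℝ) : ℝ :=
  -c * (q.1 ^ 2 + q.2 ^ 2) - μ * (q.1 ^ 2 + q.2 ^ 2) / √(radicand q.1 q.2) - (1 - μ) / 2

def partialX (μ c x y : ℝ) : ℝ :=
  -2 * c * x - 2 * μ * x * (1 - 2 * x ^ 2 + 6 * y ^ 2) / (radicand x y * √(radicand x y))

def partialY (μ c x y : ℝ) : ℝ :=
  -2 * c * y - 2 * μ * y * (1 - 6 * x ^ 2 + 2 * y ^ 2) / (radicand x y * √(radicand x y))

end

lemma radicand_eq_sq_add_sq (x y : ℝ) :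
    radicand x y = (2 * (x ^ 2 + y ^ 2) - 1) ^ 2 + 8 * y ^ 2 := by
  unfold radicand; ring

lemma radicand_zero_left (y : ℝ) : radicand 0 y = (1 + 2 * y ^ 2) ^ 2 := by
  unfold radicand; ring

lemma radicand_zero_right (x : ℝ) : radicand x 0 = (1 - 2 * x ^ 2) ^ 2 := by
  unfold radicand; ring

lemma radicand_pos_iff {x y : ℝ} :
    0 < radicand x y ↔ (x, y) ≠ (1 / √2, 0) ∧ (x, y) ≠ (-(1 / √2), 0) := by
  have hsq : (1 / √2) ^ 2 = 1 / 2 := by simp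
  rw [lt_iff_le_and_ne, and_iff_right (by rw [radicand_eq_sq_add_sq]; positivity), ne_comm,
    ← not_or, not_iff_not, radicand_eq_sq_add_sq, Prod.mk.injEq, Prod.mk.injEq, ← or_and_right,
    ← sq_eq_sq_iff_eq_or_eq_neg, hsq]
  constructor
  · intro h
    have hy : y = 0 := by nlinarith [sq_nonneg (2 * (x ^ 2 + y ^ 2) - 1), sq_nonneg y]
    subst hy
    exact ⟨by nlinarith [sq_nonneg (2 * (x ^ 2 + 0 ^ 2) - 1)], rfl⟩
  · rintro ⟨hx, rfl⟩
    rw [hx]; norm_num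

lemma hasFDerivAt_radicand (x y : ℝ) :
    HasFDerivAt (fun q : ℝ × ℝ => radicand q.1 q.2)
      ((8 * x * (2 * x ^ 2 + 2 * y ^ 2 - 1)) • fst ℝ ℝ ℝ
        + (8 * y * (2 * x ^ 2 + 2 * y ^ 2 + 1)) • snd ℝ ℝ ℝ) (x, y) := by
  have h1 := hasFDerivAt_fst (𝕜 := ℝ) (p := ((x, y) : ℝ × ℝ))
  have h2 := hasFDerivAt_snd (𝕜 := ℝ) (p := ((x, y) : ℝ × ℝ))
  refine (((((((h1.pow 4).const_mul 4).add (((h1.pow 2).const_mul 8).mul (h2.pow 2))).sub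
    ((h1.pow 2).const_mul 4)).add ((h2.pow 4).const_mul 4)).add
    ((h2.pow 2).const_mul 4)).add_const 1).congr_fderiv ?_
  ext <;> simp only [Nat.add_one_sub_one, nsmul_eq_mul, Nat.cast_ofNat, pow_one, add_comp,
    sub_comp, smul_comp, fst_comp_inl, snd_comp_inl, fst_comp_inr, snd_comp_inr, smul_zero,
    zero_add, add_zero, sub_zero, sub_apply, add_apply, smul_apply, id_apply, smul_eq_mul,
    mul_one] <;> ring

lemma hasFDerivAt_potential (μ c : ℝ) {x y : ℝ} (hQ : 0 < radicand x y) :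
    HasFDerivAt (potential μ c) (partialX μ c x y • fst ℝ ℝ ℝ + partialY μ c x y • snd ℝ ℝ ℝ)
      (x, y) := by
  have hs := (hasFDerivAt_radicand x y).sqrt hQ.ne'
  have hinv := (hasDerivAt_inv (sqrt_pos.mpr hQ).ne').comp_hasFDerivAt (x, y) hs
  have hr := hasFDerivAt_fst_sq_add_snd_sq x y
  refine (((hr.const_mul (-c)).sub ((hr.const_mul μ).mul hinv)).sub_const
    ((1 - μ) / 2)).congr_fderiv ?_
  -- with `r = x² + y²`: `Q - 2r(2r - 1) = 1 - 2x² + 6y²`, `Q - 2r(2r + 1) = 1 - 6x² + 2y²`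
  ext
  all_goals
    simp only [partialX, partialY, smul_add, neg_smul, one_div, mul_inv_rev, smul_neg,
      Function.comp_apply, sub_comp, add_comp, neg_comp, smul_comp, fst_comp_inl, snd_comp_inl,
      fst_comp_inr, snd_comp_inr, smul_zero, neg_zero, add_zero, zero_add, sub_apply, neg_apply,
      smul_apply, add_apply, id_apply, smul_eq_mul, mul_one, neg_mul]
    rw [sq_sqrt hQ.le]
    field_simp
    unfold radicand
    ring

lemma fderiv_potential_eq_zero_iff (μ c : ℝ) {x y : ℝ} (hQ : 0 < radicand x y) :
    fderiv ℝ (potential μ c) (x, y) = 0 ↔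
      (x = 0 ∨ -c * (radicand x y * √(radicand x y)) = μ * (1 - 2 * x ^ 2 + 6 * y ^ 2)) ∧
      (y = 0 ∨ -c * (radicand x y * √(radicand x y)) = μ * (1 - 6 * x ^ 2 + 2 * y ^ 2)) := by
  set D := radicand x y * √(radicand x y)
  have hD : D ≠ 0 := (mul_pos hQ (sqrt_pos.mpr hQ)).ne'
  have factor (z A : ℝ) : -2 * c * z - 2 * μ * z * A / D = 0 ↔ z = 0 ∨ -c * D = μ * A := by
    rw [show -2 * c * z - 2 * μ * z * A / D = 2 * z * (-c * D - μ * A) / D by field_simp,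
      div_eq_zero_iff, or_iff_left hD, mul_eq_zero, mul_eq_zero, sub_eq_zero,
      or_iff_right two_ne_zero]
  rw [(hasFDerivAt_potential μ c hQ).fderiv, smul_fst_add_smul_snd_eq_zero_iff]
  exact and_congr (factor x _) (factor y _)

def IsCriticalPoint (μ c : ℝ) (p : ℝ × ℝ) : Prop :=
  0 < radicand p.1 p.2 ∧ fderiv ℝ (potential μ c) p = 0

variable {μ c : ℝ}

lemma not_isCriticalPoint_of_snd_ne_zero (hμ : 0 < μ) (hμc : μ < -c) {x y : ℝ}
    (hy : y ≠ 0) : ¬ IsCriticalPoint μ c (x, y) := by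
  rintro ⟨hQ, hcrit⟩
  obtain ⟨hX, hY | hY⟩ := (fderiv_potential_eq_zero_iff μ c hQ).mp hcrit
  · exact hy hY
  rcases hX with rfl | hX
  · rw [radicand_zero_left, sqrt_sq (by positivity)] at hY
    have hw : 0 ≤ (1 + 2 * y ^ 2) ^ 3 - (1 + 2 * y ^ 2) := by nlinarith [sq_nonneg y]
    nlinarith [mul_nonneg (hμ.trans hμc).le hw,
      mul_pos (sub_pos.mpr hμc) (by positivity : (0 : ℝ) < 1 + 2 * y ^ 2)]
  · have hzero : μ * (4 * (x ^ 2 + y ^ 2)) = 0 := by linear_combination hY - hX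
    have hpos : 0 < μ * (4 * (x ^ 2 + y ^ 2)) := by positivity
    exact hpos.ne' hzero

lemma isCriticalPoint_mk_zero_iff (hμ : 0 < μ) (hμc : μ < -c) (x : ℝ) :
    IsCriticalPoint μ c (x, 0) ↔
      x = 0 ∨ x = √(1 / 2 - (1 / 2) * √(μ / -c)) ∨ x = -√(1 / 2 - (1 / 2) * √(μ / -c)) := by
  by_cases hx : x = 0
  · subst hx
    have hQ : 0 < radicand 0 0 := by rw [radicand_zero_right]; norm_num
    simp only [true_or, iff_true]
    exact ⟨hQ, (fderiv_potential_eq_zero_iff μ c hQ).mpr (by simp)⟩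
  have hu : √(μ / -c) ≤ 1 :=
    sqrt_le_one.mpr ((div_le_one (hμ.trans hμc)).mpr hμc.le)
  calc IsCriticalPoint μ c (x, 0)
      ↔ 1 - 2 * x ^ 2 ≠ 0 ∧
          -c * ((1 - 2 * x ^ 2) ^ 2 * |1 - 2 * x ^ 2|) = μ * (1 - 2 * x ^ 2) := by
        rw [← sq_pos_iff, ← radicand_zero_right]
        refine and_congr_right fun hQ => ?_
        rw [fderiv_potential_eq_zero_iff μ c hQ, radicand_zero_right, sqrt_sq_eq_abs]
        simp [hx]
    _ ↔ 1 - 2 * x ^ 2 = √(μ / -c) := mul_sq_mul_abs_eq_mul_iff_eq_sqrt (hμ.trans hμc) hμ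
    _ ↔ x ^ 2 = 1 / 2 - (1 / 2) * √(μ / -c) := by constructor <;> intro h <;> linarith
    _ ↔ _ := by
        rw [or_iff_right hx, ← sq_eq_sq_iff_eq_or_eq_neg, sq_sqrt (by linarith)]

end LeviCivita

/-- The critical points of the Levi-Civita potential `V` on its domain of smoothness
are exactly `(0,0)` and `(±x₀, 0)` with `x₀ = √(1/2 − (1/2)√(μ/(−c)))`. -/
theorem stmt_9 (μ c : ℝ) (hμ : μ ∈ Set.Ioo (0 : ℝ) 1)
    (hc : c < -1 - 2 * Real.sqrt (μ * (1 - μ))) :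
    {p : ℝ × ℝ | p ≠ (1 / Real.sqrt 2, 0) ∧ p ≠ (-(1 / Real.sqrt 2), 0) ∧
        fderiv ℝ (fun q : ℝ × ℝ =>
          -c * (q.1 ^ 2 + q.2 ^ 2)
            - μ * (q.1 ^ 2 + q.2 ^ 2) /
              Real.sqrt (4 * q.1 ^ 4 + 8 * q.1 ^ 2 * q.2 ^ 2 - 4 * q.1 ^ 2
                + 4 * q.2 ^ 4 + 4 * q.2 ^ 2 + 1)
            - (1 - μ) / 2) p = 0}
      = {((0 : ℝ), (0 : ℝ)),
          (Real.sqrt (1 / 2 - (1 / 2) * Real.sqrt (μ / (-c))), 0),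
          (-Real.sqrt (1 / 2 - (1 / 2) * Real.sqrt (μ / (-c))), 0)} := by
  obtain ⟨hμ0, hμ1⟩ := hμ
  have hμc : μ < -c := by nlinarith [sqrt_nonneg (μ * (1 - μ))]
  ext ⟨x, y⟩
  change ((x, y) ≠ _ ∧ (x, y) ≠ _ ∧ fderiv ℝ (LeviCivita.potential μ c) (x, y) = 0) ↔ _
  rw [← and_assoc, ← LeviCivita.radicand_pos_iff]
  change LeviCivita.IsCriticalPoint μ c (x, y) ↔ _
  simp only [Set.mem_insert_iff, Set.mem_singleton_iff, Prod.mk.injEq]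
  by_cases hy : y = 0
  · subst hy
    simpa using LeviCivita.isCriticalPoint_mk_zero_iff hμ0 hμc x
  · simpa [hy] using LeviCivita.not_isCriticalPoint_of_snd_ne_zero hμ0 hμc (x := x) hy
end

section
/- Let μ ∈ (0,1), let c_J := −1 − 2√(μ(1−μ)), and set x₀ := √(1/2 − (1/2)·√(μ/(−c_J))). Then V_{c_J}(x₀, 0) = 0, i.e. −c_J·x₀² − μ·x₀²/√(4x₀⁴ − 4x₀² + 1) − (1−μ)/2 = 0. -/
/-!
Write `a = √μ` and `b = √(1 - μ)`, so `a² + b² = 1`. Then `-c_J = (a + b)²`, hence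
`√(μ / (-c_J)) = a / (a + b)` and `x₀² = b / (2 (a + b))`. The radicand `4x₀⁴ - 4x₀² + 1` is
`(2x₀² - 1)² = (a / (a + b))²`, and the three terms of `V_{c_J}(x₀, 0)` become
`b (a + b) / 2`, `a b / 2` and `b² / 2`.
-/

open Real

lemma sqrt_four_mul_pow_four_sub_four_mul_sq_add_one (x : ℝ) :
    √(4 * x ^ 4 - 4 * x ^ 2 + 1) = |2 * x ^ 2 - 1| := by
  rw [← sqrt_sq_eq_abs]
  ring_nf

lemma one_add_two_sqrt_mul_one_sub_eq_sq {μ : ℝ} (h0 : 0 ≤ μ) (h1 : μ ≤ 1) :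
    1 + 2 * √(μ * (1 - μ)) = (√μ + √(1 - μ)) ^ 2 := by
  rw [sqrt_mul h0, add_sq, sq_sqrt h0, sq_sqrt (sub_nonneg.2 h1)]
  ring

section

variable {a b : ℝ}

lemma sqrt_sq_div_add_sq (ha : 0 ≤ a) (hb : 0 ≤ b) :
    √(a ^ 2 / (a + b) ^ 2) = a / (a + b) := by
  rw [← div_pow, sqrt_sq (div_nonneg ha (add_nonneg ha hb))]

lemma sq_sqrt_half_sub_half_mul_div_add (hb : 0 ≤ b) (hab : 0 < a + b) :
    √(1 / 2 - 1 / 2 * (a / (a + b))) ^ 2 = b / (2 * (a + b)) := by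
  have : a / (a + b) ≤ 1 := div_le_one_of_le₀ (le_add_of_nonneg_right hb) hab.le
  rw [sq_sqrt (by linarith)]
  field_simp
  ring

lemma abs_two_mul_div_two_mul_add_sub_one (ha : 0 ≤ a) (hab : 0 < a + b) :
    |2 * (b / (2 * (a + b))) - 1| = a / (a + b) := by
  have : 2 * (b / (2 * (a + b))) - 1 = -(a / (a + b)) := by
    field_simp
    ring
  rw [this, abs_neg, abs_of_nonneg (by positivity)]

lemma add_sq_mul_sub_sq_mul_div_sub_sq_div_two_eq_zero (ha : 0 < a) (hb : 0 ≤ b) :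
    (a + b) ^ 2 * (b / (2 * (a + b))) - a ^ 2 * (b / (2 * (a + b))) / (a / (a + b))
      - b ^ 2 / 2 = 0 := by
  have : 0 < a + b := by positivity
  field_simp
  ring

end

/-- The critical points `(±x₀, 0)` of the Levi-Civita potential at the critical Jacobi
energy lie on the zero level set `V_{c_J} = 0`. -/
theorem stmt_10 (μ : ℝ) (hμ : μ ∈ Set.Ioo (0 : ℝ) 1) :
    -(-1 - 2 * Real.sqrt (μ * (1 - μ))) *
        (Real.sqrt (1 / 2 - (1 / 2) *
          Real.sqrt (μ / (-(-1 - 2 * Real.sqrt (μ * (1 - μ))))))) ^ 2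
      - μ * (Real.sqrt (1 / 2 - (1 / 2) *
          Real.sqrt (μ / (-(-1 - 2 * Real.sqrt (μ * (1 - μ))))))) ^ 2 /
        Real.sqrt (4 * (Real.sqrt (1 / 2 - (1 / 2) *
            Real.sqrt (μ / (-(-1 - 2 * Real.sqrt (μ * (1 - μ))))))) ^ 4
          - 4 * (Real.sqrt (1 / 2 - (1 / 2) *
            Real.sqrt (μ / (-(-1 - 2 * Real.sqrt (μ * (1 - μ))))))) ^ 2 + 1)
      - (1 - μ) / 2 = 0 := by
  obtain ⟨hμ0, hμ1⟩ := hμ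
  have ha : 0 < √μ := sqrt_pos.2 hμ0
  have hb : 0 ≤ √(1 - μ) := sqrt_nonneg _
  have hμ_sq : μ = √μ ^ 2 := (sq_sqrt hμ0.le).symm
  have hμ_compl_sq : 1 - μ = √(1 - μ) ^ 2 := (sq_sqrt (by linarith)).symm
  have hcJ : -(-1 - 2 * √(μ * (1 - μ))) = (√μ + √(1 - μ)) ^ 2 := by
    rw [← one_add_two_sqrt_mul_one_sub_eq_sq hμ0.le hμ1.le]
    ring
  have hab : 0 < √μ + √(1 - μ) := by positivity
  have ht : √(μ / (√μ + √(1 - μ)) ^ 2) = √μ / (√μ + √(1 - μ)) := by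
    nth_rewrite 1 [hμ_sq]
    exact sqrt_sq_div_add_sq ha.le hb
  rw [hcJ, ht, sqrt_four_mul_pow_four_sub_four_mul_sq_add_one,
    sq_sqrt_half_sub_half_mul_div_add hb hab,
    abs_two_mul_div_two_mul_add_sub_one ha.le hab]
  have := add_sq_mul_sub_sq_mul_div_sub_sq_div_two_eq_zero ha hb
  rwa [← hμ_sq, ← hμ_compl_sq] at this
end

section
/- For every μ ∈ (0,1), the inequality μ < (16/25)·(1 + 2√(μ(1−μ))) holds if and only if μ < 16/17. -/
/-- For `μ ∈ (0,1)`, `μ < (16/25)(1 + 2√(μ(1−μ)))` iff `μ < 16/17`. -/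
theorem stmt_12 (μ : ℝ) (hμ : μ ∈ Set.Ioo (0 : ℝ) 1) :
    μ < (16 / 25) * (1 + 2 * Real.sqrt (μ * (1 - μ))) ↔ μ < 16 / 17 := by
  obtain ⟨h0, h1⟩ := hμ
  set s := Real.sqrt (μ * (1 - μ)) with hsdef
  have hs : 0 ≤ s := Real.sqrt_nonneg _
  have hs2 : s ^ 2 = μ * (1 - μ) := Real.sq_sqrt (by nlinarith)
  constructor
  · intro h
    by_contra hc
    push_neg at hc
    nlinarith [sq_nonneg (32 * s - (25 * μ - 16)), mul_nonneg hs (sub_nonneg.mpr hc),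
      sq_nonneg s, mul_pos h0 (sub_pos.mpr h1)]
  · intro h
    rcases le_or_gt μ (16/25) with h2 | h2
    · have hspos : 0 < s := Real.sqrt_pos.mpr (by nlinarith)
      nlinarith
    · nlinarith [sq_nonneg (32 * s - (25 * μ - 16)), sq_nonneg (32 * s + (25 * μ - 16)),
        mul_nonneg (le_of_lt (sub_pos.mpr h2)) hs, sq_nonneg s]
end

section
/- Let μ ∈ (0, 1/2), let c_J := −1 − 2√(μ(1−μ)), and let l := (1 − μ − √(μ(1−μ)))/(1 − 2μ). Define V : ℝ → ℝ by V(q) := −(1−μ)/√(q² + 2(q − l)²) − μ/√((q − 1)² + 2(q − l)²) − c_J. Then V(l) = 0, V′(l) = 0, V″(l) = 0, and V‴(l) > 0. -/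
/-!
Along the tangent line the distance to a primary at `(a, 0)` is `√s` with
`s q = (q - a)² + 2 (q - l)²`, and `h = s^(-1/2)` satisfies `2 s h' + s' h = 0`. Differentiating
this relation twice expresses `h''` and `h'''` through lower derivatives; at `q = l`, where
`s = r²`, `s' = 2r`, `s'' = 6` with `r = l - a`, this gives `h' = -h / r`, `h'' = 0` and
`h''' = 12 h / r³`. The choice of `l` makes the masses `1 - μ = l² K` and `μ = (1 - l)² K` with
`K = -c_J = 1 + 2 √(μ (1 - μ))`, so `V(l) = V'(l) = 0`, while `V'''(l) = 12 K ((1 - l)⁻² - l⁻²)`,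
which is positive because `l > 1/2`.
-/

open Real

theorem ContDiff.hasDerivAt_iteratedDeriv {f : ℝ → ℝ} {N : WithTop ℕ∞} (hf : ContDiff ℝ N f)
    {m : ℕ} (hm : m < N) (x : ℝ) :
    HasDerivAt (iteratedDeriv m f) (iteratedDeriv (m + 1) f x) x := by
  rw [iteratedDeriv_succ]
  exact (hf.differentiable_iteratedDeriv m hm x).hasDerivAt

theorem HasDerivAt.eq_zero_of_forall_eq_zero {F : ℝ → ℝ} {F' x : ℝ} (hF : HasDerivAt F F' x)
    (h0 : ∀ y, F y = 0) : F' = 0 := by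
  rw [← hF.deriv, show F = fun _ => 0 from funext h0, deriv_const]

theorem ContDiff.inv_sqrt {s : ℝ → ℝ} {n : WithTop ℕ∞} (hs : ContDiff ℝ n s)
    (hpos : ∀ x, 0 < s x) : ContDiff ℝ n fun x => (√(s x))⁻¹ :=
  (hs.sqrt fun x => (hpos x).ne').inv fun x => (sqrt_pos.2 (hpos x)).ne'

section InvSqrt

variable {s h : ℝ → ℝ} (hs : ContDiff ℝ 3 s) (hpos : ∀ x, 0 < s x)
  (hh : h = fun x => (√(s x))⁻¹)
include hs hpos hh

theorem inv_sqrt_ode₁ (x : ℝ) : 2 * s x * deriv h x + deriv s x * h x = 0 := by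
  subst hh
  have hx := hpos x
  have hsx : √(s x) ≠ 0 := (sqrt_pos.2 hx).ne'
  have hsd : HasDerivAt s (deriv s x) x := (hs.differentiable (by norm_num) x).hasDerivAt
  rw [((hsd.sqrt hx.ne').fun_inv hsx).deriv]
  field_simp
  rw [sq_sqrt hx.le]
  ring

theorem inv_sqrt_ode₂ (x : ℝ) :
    2 * s x * iteratedDeriv 2 h x + 3 * deriv s x * deriv h x + iteratedDeriv 2 s x * h x = 0 := by
  have hh' : ContDiff ℝ 3 h := hh ▸ hs.inv_sqrt hpos
  have h0 := hh'.hasDerivAt_iteratedDeriv (m := 0) (by norm_num) x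
  have h1 := hh'.hasDerivAt_iteratedDeriv (m := 1) (by norm_num) x
  have s0 := hs.hasDerivAt_iteratedDeriv (m := 0) (by norm_num) x
  have s1 := hs.hasDerivAt_iteratedDeriv (m := 1) (by norm_num) x
  simp only [iteratedDeriv_zero, iteratedDeriv_one, zero_add] at h0 h1 s0 s1
  have := (((s0.const_mul 2).mul h1).add (s1.mul h0)).eq_zero_of_forall_eq_zero
    (inv_sqrt_ode₁ hs hpos hh)
  linear_combination this

theorem inv_sqrt_ode₃ (x : ℝ) :
    2 * s x * iteratedDeriv 3 h x + 5 * deriv s x * iteratedDeriv 2 h x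
      + 4 * iteratedDeriv 2 s x * deriv h x + iteratedDeriv 3 s x * h x = 0 := by
  have hh' : ContDiff ℝ 3 h := hh ▸ hs.inv_sqrt hpos
  have h0 := hh'.hasDerivAt_iteratedDeriv (m := 0) (by norm_num) x
  have h1 := hh'.hasDerivAt_iteratedDeriv (m := 1) (by norm_num) x
  have h2 := hh'.hasDerivAt_iteratedDeriv (m := 2) (by norm_num) x
  have s0 := hs.hasDerivAt_iteratedDeriv (m := 0) (by norm_num) x
  have s1 := hs.hasDerivAt_iteratedDeriv (m := 1) (by norm_num) x
  have s2 := hs.hasDerivAt_iteratedDeriv (m := 2) (by norm_num) x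
  simp only [iteratedDeriv_zero, iteratedDeriv_one, zero_add] at h0 h1 h2 s0 s1 s2
  have := ((((s0.const_mul 2).mul h2).add ((s1.const_mul 3).mul h1)).add
    (s2.mul h0)).eq_zero_of_forall_eq_zero (inv_sqrt_ode₂ hs hpos hh)
  linear_combination this

end InvSqrt

/-- Squared distance from the point `(q, √2 (q - l))` of the tangent line to the point `(a, 0)`. -/
def tangentDistSq (a l q : ℝ) : ℝ := (q - a) ^ 2 + 2 * (q - l) ^ 2

noncomputable def tangentInvDist (a l q : ℝ) : ℝ := (√(tangentDistSq a l q))⁻¹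

section TangentInvDist

variable {a l : ℝ}

theorem contDiff_tangentDistSq {n : WithTop ℕ∞} : ContDiff ℝ n (tangentDistSq a l) := by
  unfold tangentDistSq
  fun_prop

theorem tangentDistSq_pos (hal : a ≠ l) (q : ℝ) : 0 < tangentDistSq a l q := by
  by_contra! h
  have : q - a = 0 ∧ q - l = 0 := by
    unfold tangentDistSq at h
    constructor <;> nlinarith [sq_nonneg (q - a), sq_nonneg (q - l)]
  exact hal (by linarith [this.1, this.2])

theorem iteratedDeriv_tangentDistSq_self :
    tangentDistSq a l l = (l - a) ^ 2 ∧ deriv (tangentDistSq a l) l = 2 * (l - a) ∧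
      iteratedDeriv 2 (tangentDistSq a l) l = 6 ∧ iteratedDeriv 3 (tangentDistSq a l) l = 0 := by
  have h1 : deriv (tangentDistSq a l) = fun q => 2 * (q - a) + 4 * (q - l) := by
    funext q
    exact ((((hasDerivAt_id q).sub_const a).pow 2).add
      ((((hasDerivAt_id q).sub_const l).pow 2).const_mul 2)).deriv.trans (by simp; ring)
  have h2 : deriv (fun q => 2 * (q - a) + 4 * (q - l)) = fun _ => 6 := by
    funext q
    exact ((((hasDerivAt_id q).sub_const a).const_mul 2).add
      (((hasDerivAt_id q).sub_const l).const_mul 4)).deriv.trans (by norm_num)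
  refine ⟨by simp [tangentDistSq], by rw [h1]; ring, ?_, ?_⟩
  · rw [iteratedDeriv_succ, iteratedDeriv_one, h1, h2]
  · rw [iteratedDeriv_succ, iteratedDeriv_succ, iteratedDeriv_one, h1, h2, deriv_const]

theorem contDiff_tangentInvDist (hal : a ≠ l) {n : WithTop ℕ∞} :
    ContDiff ℝ n (tangentInvDist a l) :=
  contDiff_tangentDistSq.inv_sqrt (tangentDistSq_pos hal)

theorem tangentInvDist_self : tangentInvDist a l l = |l - a|⁻¹ := by
  rw [tangentInvDist, iteratedDeriv_tangentDistSq_self.1, sqrt_sq_eq_abs]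

theorem deriv_tangentInvDist_self (hal : a ≠ l) :
    deriv (tangentInvDist a l) l = -tangentInvDist a l l / (l - a) := by
  have hr : l - a ≠ 0 := sub_ne_zero.2 hal.symm
  obtain ⟨hs0, hs1, -⟩ := iteratedDeriv_tangentDistSq_self (a := a) (l := l)
  have hode := inv_sqrt_ode₁ (h := tangentInvDist a l) contDiff_tangentDistSq
    (tangentDistSq_pos hal) rfl l
  rw [hs0, hs1] at hode
  rw [eq_div_iff hr]
  apply mul_left_cancel₀ (mul_ne_zero two_ne_zero hr)
  linear_combination hode

theorem iteratedDeriv_two_tangentInvDist_self (hal : a ≠ l) :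
    iteratedDeriv 2 (tangentInvDist a l) l = 0 := by
  have hr : l - a ≠ 0 := sub_ne_zero.2 hal.symm
  obtain ⟨hs0, hs1, hs2, -⟩ := iteratedDeriv_tangentDistSq_self (a := a) (l := l)
  have hode := inv_sqrt_ode₂ (h := tangentInvDist a l) contDiff_tangentDistSq
    (tangentDistSq_pos hal) rfl l
  rw [hs0, hs1, hs2] at hode
  have hd : (l - a) * deriv (tangentInvDist a l) l = -tangentInvDist a l l := by
    rw [deriv_tangentInvDist_self hal, mul_div_cancel₀ _ hr]
  have h2 : (l - a) ^ 2 * iteratedDeriv 2 (tangentInvDist a l) l = 0 := by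
    linear_combination hode / 2 - 3 * hd
  simpa [hr] using h2

theorem iteratedDeriv_three_tangentInvDist_self (hal : a ≠ l) :
    iteratedDeriv 3 (tangentInvDist a l) l = 12 * tangentInvDist a l l / (l - a) ^ 3 := by
  have hr : l - a ≠ 0 := sub_ne_zero.2 hal.symm
  obtain ⟨hs0, hs1, hs2, hs3⟩ := iteratedDeriv_tangentDistSq_self (a := a) (l := l)
  have hode := inv_sqrt_ode₃ (h := tangentInvDist a l) contDiff_tangentDistSq
    (tangentDistSq_pos hal) rfl l
  rw [hs0, hs1, hs2, hs3, iteratedDeriv_two_tangentInvDist_self hal] at hode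
  have hd : (l - a) * deriv (tangentInvDist a l) l = -tangentInvDist a l l := by
    rw [deriv_tangentInvDist_self hal, mul_div_cancel₀ _ hr]
  rw [eq_div_iff (pow_ne_zero 3 hr)]
  linear_combination (l - a) / 2 * hode - 12 * hd

end TangentInvDist

theorem tangentInvDist_zero_self {l : ℝ} (hl : 0 < l) : tangentInvDist 0 l l = l⁻¹ := by
  rw [tangentInvDist_self, sub_zero, abs_of_pos hl]

theorem tangentInvDist_one_self {l : ℝ} (hl : l < 1) : tangentInvDist 1 l l = (1 - l)⁻¹ := by
  rw [tangentInvDist_self, abs_of_neg (by linarith), neg_sub]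

/-- `V` from the statement, written with the masses `1 - μ = l² K` and `μ = (1 - l)² K`. -/
noncomputable def vertexPotential (K l q : ℝ) : ℝ :=
  K - (l ^ 2 * K * tangentInvDist 0 l q + (1 - l) ^ 2 * K * tangentInvDist 1 l q)

section VertexPotential

variable {K l : ℝ} (hl0 : 0 < l) (hl1 : l < 1)
include hl0 hl1

theorem iteratedDeriv_vertexPotential {n : ℕ} (hn : 0 < n) (x : ℝ) :
    iteratedDeriv n (vertexPotential K l) x = -(l ^ 2 * K * iteratedDeriv n (tangentInvDist 0 l) x
      + (1 - l) ^ 2 * K * iteratedDeriv n (tangentInvDist 1 l) x) := by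
  unfold vertexPotential
  rw [iteratedDeriv_const_sub hn, iteratedDeriv_neg,
    iteratedDeriv_fun_add
      (contDiff_const.mul (contDiff_tangentInvDist (by linarith))).contDiffAt
      (contDiff_const.mul (contDiff_tangentInvDist (by linarith))).contDiffAt,
    iteratedDeriv_const_mul_field, iteratedDeriv_const_mul_field]

theorem vertexPotential_self : vertexPotential K l l = 0 := by
  have : l ≠ 0 := hl0.ne'
  have : 1 - l ≠ 0 := by linarith
  rw [vertexPotential, tangentInvDist_zero_self hl0, tangentInvDist_one_self hl1]
  field_simp
  ring

theorem deriv_vertexPotential_self : deriv (vertexPotential K l) l = 0 := by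
  have : l ≠ 0 := hl0.ne'
  have : l - 1 ≠ 0 := by linarith
  rw [← iteratedDeriv_one, iteratedDeriv_vertexPotential hl0 hl1 one_pos, iteratedDeriv_one,
    iteratedDeriv_one, deriv_tangentInvDist_self hl0.ne, deriv_tangentInvDist_self (by linarith),
    tangentInvDist_zero_self hl0, tangentInvDist_one_self hl1]
  field_simp
  ring

theorem iteratedDeriv_two_vertexPotential_self : iteratedDeriv 2 (vertexPotential K l) l = 0 := by
  rw [iteratedDeriv_vertexPotential hl0 hl1 two_pos,
    iteratedDeriv_two_tangentInvDist_self hl0.ne,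
    iteratedDeriv_two_tangentInvDist_self (by linarith)]
  ring

theorem iteratedDeriv_three_vertexPotential_self :
    iteratedDeriv 3 (vertexPotential K l) l = 12 * K * (((1 - l) ^ 2)⁻¹ - (l ^ 2)⁻¹) := by
  have : l ≠ 0 := hl0.ne'
  have : l - 1 ≠ 0 := by linarith
  have : 1 - l ≠ 0 := by linarith
  rw [iteratedDeriv_vertexPotential hl0 hl1 three_pos,
    iteratedDeriv_three_tangentInvDist_self hl0.ne,
    iteratedDeriv_three_tangentInvDist_self (by linarith),
    tangentInvDist_zero_self hl0, tangentInvDist_one_self hl1]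
  field_simp
  ring

end VertexPotential

noncomputable def criticalAbscissa (μ : ℝ) : ℝ := (1 - μ - √(μ * (1 - μ))) / (1 - 2 * μ)

section CriticalAbscissa

variable {μ : ℝ} (hμ0 : 0 < μ) (hμ : μ < 1 / 2)
include hμ0 hμ

theorem criticalAbscissa_sq_mul :
    criticalAbscissa μ ^ 2 * (1 + 2 * √(μ * (1 - μ))) = 1 - μ := by
  have hs := sq_sqrt (show 0 ≤ μ * (1 - μ) by nlinarith)
  rw [criticalAbscissa, div_pow, div_mul_eq_mul_div, div_eq_iff (by nlinarith)]
  linear_combination (2 * √(μ * (1 - μ)) + 4 * μ - 3) * hs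

theorem one_sub_criticalAbscissa_sq_mul :
    (1 - criticalAbscissa μ) ^ 2 * (1 + 2 * √(μ * (1 - μ))) = μ := by
  have hs := sq_sqrt (show 0 ≤ μ * (1 - μ) by nlinarith)
  rw [criticalAbscissa, one_sub_div (by linarith), div_pow, div_mul_eq_mul_div,
    div_eq_iff (by nlinarith)]
  linear_combination (1 + 2 * √(μ * (1 - μ)) - 4 * μ) * hs

theorem criticalAbscissa_mem_Ioo : criticalAbscissa μ ∈ Set.Ioo (1 / 2) 1 := by
  have hs := sq_sqrt (show 0 ≤ μ * (1 - μ) by nlinarith)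
  have hs0 := sqrt_nonneg (μ * (1 - μ))
  have hsμ : μ < √(μ * (1 - μ)) := by nlinarith
  have hs_half : √(μ * (1 - μ)) < 1 / 2 := by nlinarith
  constructor
  · rw [criticalAbscissa, lt_div_iff₀ (by linarith)]; linarith
  · rw [criticalAbscissa, div_lt_one (by linarith)]; linarith

end CriticalAbscissa

/-- The restriction `V` of `U − c_J` to the tangent line `q₂ = √2(q₁ − l)` vanishes to
second order at `l`, with positive third derivative, when `μ ∈ (0, 1/2)`. -/
theorem stmt_14 (μ : ℝ) (hμ : μ ∈ Set.Ioo (0 : ℝ) (1 / 2)) :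
    letI cJ : ℝ := -1 - 2 * Real.sqrt (μ * (1 - μ))
    letI l : ℝ := (1 - μ - Real.sqrt (μ * (1 - μ))) / (1 - 2 * μ)
    letI V : ℝ → ℝ := fun q =>
      -(1 - μ) / Real.sqrt (q ^ 2 + 2 * (q - l) ^ 2)
        - μ / Real.sqrt ((q - 1) ^ 2 + 2 * (q - l) ^ 2) - cJ
    V l = 0 ∧ deriv V l = 0 ∧ iteratedDeriv 2 V l = 0 ∧ iteratedDeriv 3 V l > 0 := by
  obtain ⟨hμ0, hμ2⟩ := hμ
  generalize hl : (1 - μ - √(μ * (1 - μ))) / (1 - 2 * μ) = l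
  set K := 1 + 2 * √(μ * (1 - μ))
  obtain ⟨hl2, hl1⟩ : l ∈ Set.Ioo (1 / 2) 1 := hl ▸ criticalAbscissa_mem_Ioo hμ0 hμ2
  have hA : l ^ 2 * K = 1 - μ := hl ▸ criticalAbscissa_sq_mul hμ0 hμ2
  have hB : (1 - l) ^ 2 * K = μ := hl ▸ one_sub_criticalAbscissa_sq_mul hμ0 hμ2
  have hV : (fun q => -(1 - μ) / √(q ^ 2 + 2 * (q - l) ^ 2)
      - μ / √((q - 1) ^ 2 + 2 * (q - l) ^ 2) - (-1 - 2 * √(μ * (1 - μ)))) =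
      vertexPotential K l := by
    funext q
    rw [vertexPotential, hA, hB]
    simp only [K, tangentInvDist, tangentDistSq, sub_zero]
    ring
  have hl0 : 0 < l := by linarith
  rw [hV]
  refine ⟨vertexPotential_self hl0 hl1, deriv_vertexPotential_self hl0 hl1,
    iteratedDeriv_two_vertexPotential_self hl0 hl1, ?_⟩
  have hsq : (l ^ 2)⁻¹ < ((1 - l) ^ 2)⁻¹ := by
    gcongr
    linarith
  rw [iteratedDeriv_three_vertexPotential_self hl0 hl1]
  exact mul_pos (by positivity) (sub_pos.2 hsq)
end

section
/- Let U : ℝ² ∖ {(0,0), (1,0)} → ℝ be defined by U(q) := −(1/2)/‖q‖ − (1/2)/‖q − (1,0)‖. Then for every c < −2, the set {(0,0)} ∪ { q ∈ ℝ² : q ≠ (0,0), q₁ < 1/2, and U(q) ≤ c } is a convex subset of ℝ². -/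
/-!
Write `r = |q|`, `s = |q - (1,0)|` and `a = -2c > 4`. Away from the origin, `U(q) ≤ c` says
`a ≤ 1/r + 1/s`, i.e. `a r s ≤ r + s`, and in this product form the origin belongs to the set, which
is then star-shaped about it. A segment avoiding the origin stays, by convexity, in the disk
`2r < 1` and in the wedge `2 q₂² ≤ (1 - 2 q₁)²`, both of which contain the Earth component. Inside
them the restriction of `1/r + 1/s` to a line has negative second derivative at each of its
critical points, so it has no interior minimum on the segment and is bounded below by its values
at the endpoints. The sign of that second derivative comes down to the positivity of one
polynomial in `r, s`.
-/

open Set Filter Topology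

theorem min_le_of_second_deriv_neg_at_critical {g g' g'' : ℝ → ℝ} {a b : ℝ} (hab : a ≤ b)
    (hcont : ContinuousOn g (Icc a b)) (hg : ∀ t ∈ Ioo a b, HasDerivAt g (g' t) t)
    (hg' : ∀ t ∈ Ioo a b, HasDerivAt g' (g'' t) t)
    (hcrit : ∀ t ∈ Ioo a b, g' t = 0 → g'' t < 0) :
    ∀ t ∈ Icc a b, min (g a) (g b) ≤ g t := by
  obtain ⟨c, hc, hmin⟩ := isCompact_Icc.exists_isMinOn (nonempty_Icc.2 hab) hcont
  intro t ht
  refine le_trans ?_ (hmin ht)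
  rcases eq_endpoints_or_mem_Ioo_of_mem_Icc hc with rfl | rfl | hc'
  · exact min_le_left _ _
  · exact min_le_right _ _
  exfalso
  have hloc : IsLocalMin g c := hmin.isLocalMin (Icc_mem_nhds hc'.1 hc'.2)
  have hd : g' c = 0 := hloc.hasDerivAt_eq_zero (hg c hc')
  have hderiv : deriv g =ᶠ[𝓝 c] g' :=
    eventually_of_mem (Ioo_mem_nhds hc'.1 hc'.2) fun t ht => (hg t ht).deriv
  have hdd : deriv (deriv g) c = g'' c := by rw [hderiv.deriv_eq]; exact (hg' c hc').deriv
  have hmax : IsLocalMax g c := isLocalMax_of_deriv_deriv_neg (hdd ▸ hcrit c hc' hd)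
    ((hg c hc').deriv.trans hd) (hg c hc').continuousAt
  have hconst : g =ᶠ[𝓝 c] fun _ => g c := by
    filter_upwards [hloc, hmax] with t h₁ h₂ using le_antisymm h₂ h₁
  have hzero : deriv g =ᶠ[𝓝 c] fun _ => 0 :=
    hconst.eventuallyEq_nhds.mono fun t ht => by rw [ht.deriv_eq, deriv_const]
  have hneg := hcrit c hc' hd
  rw [← hdd, hzero.deriv_eq, deriv_const] at hneg
  exact lt_irrefl 0 hneg

theorem hasDerivAt_of_hasDerivAt_sq {f : ℝ → ℝ} {D t : ℝ} (hf : ∀ τ, 0 ≤ f τ) (ht : f t ≠ 0)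
    (h : HasDerivAt (fun τ => f τ ^ 2) (2 * D) t) : HasDerivAt f (D / f t) t := by
  convert h.sqrt (by positivity) using 1
  · exact funext fun τ => (Real.sqrt_sq (hf τ)).symm
  · rw [Real.sqrt_sq (hf t)]
    field_simp

theorem HasDerivAt.one_div_of_norm {n D : ℝ → ℝ} {t : ℝ} (hn : HasDerivAt n (D t / n t) t)
    (ht : n t ≠ 0) : HasDerivAt (fun τ => 1 / n τ) (-(D t / n t ^ 3)) t := by
  simp only [one_div]
  refine (hn.fun_inv ht).congr_deriv ?_
  field_simp

theorem HasDerivAt.neg_div_pow_three_of_norm {n D : ℝ → ℝ} {k t : ℝ}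
    (hn : HasDerivAt n (D t / n t) t) (hD : HasDerivAt D k t) (ht : n t ≠ 0) :
    HasDerivAt (fun τ => -(D τ / n τ ^ 3)) (3 * D t ^ 2 / n t ^ 5 - k / n t ^ 3) t := by
  refine (hD.fun_div (hn.fun_pow 3) (pow_ne_zero 3 ht)).fun_neg.congr_deriv ?_
  field_simp
  ring

theorem mem_segment_or_mem_segment_of_mem_segment {E : Type*} [AddCommGroup E] [Module ℝ E]
    {x y z p : E} (hz : z ∈ segment ℝ x y) (hp : p ∈ segment ℝ x y) :
    z ∈ segment ℝ x p ∨ z ∈ segment ℝ p y := by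
  rcases eq_or_ne x y with rfl | hxy
  · simp only [segment_same, mem_singleton_iff] at hz hp
    simp [hz, hp]
  rw [mem_segment_iff_wbtw, mem_segment_iff_wbtw] at *
  have hray : SameRay ℝ (z -ᵥ x) (p -ᵥ x) :=
    hz.sameRay_vsub_left.trans hp.sameRay_vsub_left.symm
      fun h => (hxy (vsub_eq_zero_iff_eq.1 h).symm).elim
  exact (wbtw_total_of_sameRay_vsub_left hray).imp id hz.trans_left_right

theorem StarConvex.convex_of_segment_subset {E : Type*} [AddCommGroup E] [Module ℝ E]
    {s : Set E} {p : E} (hs : StarConvex ℝ p s)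
    (h : ∀ x ∈ s, ∀ y ∈ s, p ∉ segment ℝ x y → segment ℝ x y ⊆ s) : Convex ℝ s := by
  rw [convex_iff_segment_subset]
  intro x hx y hy
  by_cases hp : p ∈ segment ℝ x y
  · intro z hz
    rcases mem_segment_or_mem_segment_of_mem_segment hz hp with hz' | hz'
    · exact hs.segment_subset hx (segment_symm ℝ x p ▸ hz')
    · exact hs.segment_subset hy hz'
  · exact h x hx y hy hp

section Algebra

/-- With `x = 1 - 2r > 0` and `z = r + s - 1 ≥ 0`, the polynomial minus
`(3(x + z)² + 19z³ + 8xz² + z⁴)/32` times the wedge inequality has positive coefficients. -/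
theorem curvature_poly_pos {r s u : ℝ} (hr : 2 * r < 1) (hrs : 1 ≤ r + s)
    (hu : 2 * u = 1 + r ^ 2 - s ^ 2) (hwedge : 2 * (r ^ 2 - u ^ 2) ≤ (1 - 2 * u) ^ 2) :
    0 < 2 * (r ^ 3 + s ^ 3) * (r ^ 3 - u * (r ^ 3 + s ^ 3)) ^ 2
        + ((r ^ 3 + s ^ 3) ^ 3 - 3 * (r ^ 3 * s ^ 3) * (r + s)) * (1 - 2 * u) ^ 2 := by
  obtain rfl : u = (1 + r ^ 2 - s ^ 2) / 2 := by linarith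
  obtain ⟨x, hx, rfl⟩ : ∃ x, 0 < x ∧ r = (1 - x) / 2 := ⟨1 - 2 * r, by linarith, by ring⟩
  obtain ⟨z, hz, rfl⟩ : ∃ z, 0 ≤ z ∧ s = z + (1 + x) / 2 :=
    ⟨s - (1 + x) / 2, by linarith, by ring⟩
  linear_combination (norm := skip)
    (3 * (x + z) ^ 2 + 19 * z ^ 3 + 8 * x * z ^ 2 + z ^ 4) / 32 * hwedge
  rw [← neg_pos]
  ring_nf
  positivity

theorem one_le_add_of_sq_eq {u v r s : ℝ} (hr : 0 ≤ r) (hs : 0 ≤ s)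
    (hr2 : r ^ 2 = u ^ 2 + v ^ 2) (hs2 : s ^ 2 = (u - 1) ^ 2 + v ^ 2) : 1 ≤ r + s := by
  have hcs : -(u * (u - 1) + v ^ 2) ≤ r * s := by
    have : (u * (u - 1) + v ^ 2) ^ 2 ≤ (r * s) ^ 2 := by nlinarith [sq_nonneg v]
    nlinarith [mul_nonneg hr hs]
  nlinarith

theorem pow_three_ne_mul_add_pow_three {u r s : ℝ} (hr : 0 < r) (hs : 0 < s) (hr2 : r ^ 2 = u ^ 2)
    (hs2 : s ^ 2 = (u - 1) ^ 2) (hr_half : 2 * r < 1) : r ^ 3 ≠ u * (r ^ 3 + s ^ 3) := by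
  intro h
  have hu : u < 1 / 2 := by nlinarith
  have hs1 : s = 1 - u := by
    have : (s - (1 - u)) * (s + (1 - u)) = 0 := by linear_combination hs2
    rcases mul_eq_zero.1 this with h' | h' <;> linarith
  rcases le_or_gt u 0 with hu0 | hu0
  · nlinarith [pow_pos hr 3, pow_pos hs 3]
  · obtain rfl : r = u := by nlinarith
    subst hs1
    have h₁ : r * (1 - r) * (1 - 2 * r) = 0 := by linear_combination -h
    have h₂ : 0 < r * (1 - r) * (1 - 2 * r) := by apply mul_pos <;> nlinarith
    linarith

theorem exists_eq_mul_of_mul_eq_mul {p q w₁ w₂ : ℝ} (hpq : p ≠ 0 ∨ q ≠ 0)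
    (h : p * w₂ = q * w₁) : ∃ l, w₁ = l * p ∧ w₂ = l * q := by
  rcases hpq with hp | hq
  · exact ⟨w₁ / p, by field_simp, by field_simp; linarith⟩
  · exact ⟨w₂ / q, by field_simp; linarith, by field_simp⟩

theorem curvature_ineq {u v r s : ℝ} (hr : 0 < r) (hs : 0 < s) (hr2 : r ^ 2 = u ^ 2 + v ^ 2)
    (hs2 : s ^ 2 = (u - 1) ^ 2 + v ^ 2) (hr_half : 2 * r < 1)
    (hwedge : 2 * v ^ 2 ≤ (1 - 2 * u) ^ 2) (hgrad : v ≠ 0 ∨ r ^ 3 - u * (r ^ 3 + s ^ 3) ≠ 0) :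
    3 * (r ^ 3 * s ^ 3) * (r + s) * v ^ 2
      < (r ^ 3 + s ^ 3) * ((r ^ 3 + s ^ 3) ^ 2 * v ^ 2 + (r ^ 3 - u * (r ^ 3 + s ^ 3)) ^ 2) := by
  set A := r ^ 3 + s ^ 3
  set T := r ^ 3 - u * A
  set B := A ^ 3 - 3 * (r ^ 3 * s ^ 3) * (r + s)
  have hA : 0 < A := by positivity
  suffices 0 < B * v ^ 2 + A * T ^ 2 by linarith
  rcases le_or_gt B 0 with hB | hB
  · have hpoly := curvature_poly_pos (u := u) hr_half (one_le_add_of_sq_eq hr.le hs.le hr2 hs2)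
      (by linarith) (by nlinarith)
    nlinarith [mul_le_mul_of_nonpos_left hwedge hB]
  · rcases hgrad with hv | hT
    · have : 0 < v ^ 2 := by positivity
      nlinarith [mul_pos hB this, mul_nonneg hA.le (sq_nonneg T)]
    · have : 0 < T ^ 2 := by positivity
      nlinarith [mul_nonneg hB.le (sq_nonneg v), mul_pos hA this]

theorem mul_mul_le_add_of_mul_le_add {a r s s' τ : ℝ} (ha : 4 < a) (hs : 1 ≤ 2 * s)
    (hs' : 1 ≤ 2 * s') (hτ₀ : 0 ≤ τ) (hτ₁ : τ ≤ 1) (hs's : s' ≤ τ * s + (1 - τ))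
    (h : a * (r * s) ≤ r + s) : a * (τ * r * s') ≤ τ * r + s' := by
  have has : 0 < a * s - 1 := by nlinarith
  have has' : 0 < a * s' - 1 := by nlinarith
  have h₁ : τ * s * (a * s' - 1) ≤ s' * (a * s - 1) := by
    nlinarith [mul_nonneg (sub_nonneg.2 hτ₁) (by nlinarith : (0 : ℝ) ≤ a * s * s' - 1)]
  have h₂ : τ * r * (a * s' - 1) * (a * s - 1) ≤ s' * (a * s - 1) := by
    nlinarith [mul_le_mul_of_nonneg_left (by linarith : r * (a * s - 1) ≤ s)
      (mul_nonneg hτ₀ has'.le)]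
  nlinarith [le_of_mul_le_mul_right h₂ has]

/-- At a critical point the direction `w` is a multiple of the tangent `(v A, T)` of the level
curve, where `A = r³ + s³` and `T = r³ - u A`; the second derivative is then a positive multiple
of the difference in `curvature_ineq`. -/
theorem second_deriv_neg_of_deriv_eq_zero {u v r s w₁ w₂ : ℝ} (hr : 0 < r) (hs : 0 < s)
    (hr2 : r ^ 2 = u ^ 2 + v ^ 2) (hs2 : s ^ 2 = (u - 1) ^ 2 + v ^ 2) (hr_half : 2 * r < 1)
    (hwedge : 2 * v ^ 2 ≤ (1 - 2 * u) ^ 2) (hw : w₁ ≠ 0 ∨ w₂ ≠ 0)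
    (hcrit : -((u * w₁ + v * w₂) / r ^ 3) + -(((u - 1) * w₁ + v * w₂) / s ^ 3) = 0) :
    3 * (u * w₁ + v * w₂) ^ 2 / r ^ 5 - (w₁ ^ 2 + w₂ ^ 2) / r ^ 3
      + (3 * ((u - 1) * w₁ + v * w₂) ^ 2 / s ^ 5 - (w₁ ^ 2 + w₂ ^ 2) / s ^ 3) < 0 := by
  set A := r ^ 3 + s ^ 3
  set T := r ^ 3 - u * A
  have hA : 0 < A := by positivity
  have hgrad : v ≠ 0 ∨ T ≠ 0 := by
    by_contra! h
    obtain ⟨rfl, hT⟩ := h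
    exact pow_three_ne_mul_add_pow_three hr hs (by simpa using hr2) (by simpa using hs2) hr_half
      (sub_eq_zero.1 hT)
  have hperp : v * A * w₂ = T * w₁ := by
    field_simp at hcrit
    linear_combination -hcrit
  obtain ⟨l, rfl, rfl⟩ :=
    exists_eq_mul_of_mul_eq_mul (hgrad.imp_left fun hv => mul_ne_zero hv hA.ne') hperp
  have hl : l ≠ 0 := by rintro rfl; simp at hw
  have hcurv := curvature_ineq hr hs hr2 hs2 hr_half hwedge hgrad
  calc _ = l ^ 2 * (3 * (r ^ 3 * s ^ 3) * (r + s) * v ^ 2 - A * (A ^ 2 * v ^ 2 + T ^ 2))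
        / (r ^ 3 * s ^ 3) := by
        simp only [T, A]
        field_simp
        ring
    _ < 0 := div_neg_of_neg_of_pos (mul_neg_of_pos_of_neg (by positivity) (by linarith))
        (by positivity)

end Algebra

section EuclideanPlane

/-- The Euclidean norm of `ℝ × ℝ`, whose default norm is the sup norm. -/
noncomputable def euclNorm (q : ℝ × ℝ) : ℝ := ‖WithLp.toLp 2 q‖

def dot (q w : ℝ × ℝ) : ℝ := q.1 * w.1 + q.2 * w.2

theorem euclNorm_eq_sqrt (q : ℝ × ℝ) : euclNorm q = √(q.1 ^ 2 + q.2 ^ 2) := by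
  simp [euclNorm, WithLp.prod_norm_eq_of_L2]

theorem euclNorm_sq (q : ℝ × ℝ) : euclNorm q ^ 2 = q.1 ^ 2 + q.2 ^ 2 := by
  rw [euclNorm_eq_sqrt, Real.sq_sqrt (by positivity)]

theorem euclNorm_sub_sq (q : ℝ × ℝ) : euclNorm (q - (1, 0)) ^ 2 = (q.1 - 1) ^ 2 + q.2 ^ 2 := by
  simp [euclNorm_sq]

theorem euclNorm_nonneg (q : ℝ × ℝ) : 0 ≤ euclNorm q := norm_nonneg _

theorem euclNorm_pos {q : ℝ × ℝ} (hq : q ≠ 0) : 0 < euclNorm q := by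
  simpa [euclNorm] using hq

theorem euclNorm_add_le (p q : ℝ × ℝ) : euclNorm (p + q) ≤ euclNorm p + euclNorm q := by
  simpa [euclNorm] using norm_add_le (WithLp.toLp 2 p) (WithLp.toLp 2 q)

theorem euclNorm_smul (τ : ℝ) (q : ℝ × ℝ) : euclNorm (τ • q) = |τ| * euclNorm q := by
  simp [euclNorm, norm_smul]

theorem convexOn_euclNorm : ConvexOn ℝ univ euclNorm :=
  convexOn_univ_norm.comp_linearMap (WithLp.linearEquiv 2 ℝ (ℝ × ℝ)).symm.toLinearMap

theorem one_lt_two_mul_euclNorm_sub {q : ℝ × ℝ} (hq : q.1 < 1 / 2) :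
    1 < 2 * euclNorm (q - (1, 0)) := by
  nlinarith [euclNorm_sub_sq q, euclNorm_nonneg (q - (1, 0)), sq_nonneg q.2]

theorem hasDerivAt_dot_line (p w : ℝ × ℝ) (t : ℝ) :
    HasDerivAt (fun τ => dot (p + τ • w) w) (dot w w) t := by
  simp only [dot, Prod.fst_add, Prod.snd_add, Prod.smul_fst, Prod.smul_snd, smul_eq_mul]
  refine ((((hasDerivAt_id t).mul_const w.1).const_add p.1).mul_const w.1 |>.add
    ((((hasDerivAt_id t).mul_const w.2).const_add p.2).mul_const w.2)).congr_deriv ?_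
  simp

theorem hasDerivAt_euclNorm_line (p w : ℝ × ℝ) {t : ℝ} (h : p + t • w ≠ 0) :
    HasDerivAt (fun τ => euclNorm (p + τ • w)) (dot (p + t • w) w / euclNorm (p + t • w)) t := by
  refine hasDerivAt_of_hasDerivAt_sq (fun τ => euclNorm_nonneg _) (euclNorm_pos h).ne' ?_
  simp only [euclNorm_sq, dot, Prod.fst_add, Prod.snd_add, Prod.smul_fst, Prod.smul_snd,
    smul_eq_mul]
  have h₁ := ((hasDerivAt_id t).mul_const w.1).const_add p.1
  have h₂ := ((hasDerivAt_id t).mul_const w.2).const_add p.2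
  refine ((h₁.fun_pow 2).add (h₂.fun_pow 2)).congr_deriv ?_
  simp
  ring

theorem hasDerivAt_one_div_euclNorm_line (p w : ℝ × ℝ) {t : ℝ} (h : p + t • w ≠ 0) :
    HasDerivAt (fun τ => 1 / euclNorm (p + τ • w))
      (-(dot (p + t • w) w / euclNorm (p + t • w) ^ 3)) t :=
  HasDerivAt.one_div_of_norm (D := fun τ => dot (p + τ • w) w) (hasDerivAt_euclNorm_line p w h)
    (euclNorm_pos h).ne'

theorem hasDerivAt_neg_dot_div_euclNorm_pow_three_line (p w : ℝ × ℝ) {t : ℝ}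
    (h : p + t • w ≠ 0) :
    HasDerivAt (fun τ => -(dot (p + τ • w) w / euclNorm (p + τ • w) ^ 3))
      (3 * dot (p + t • w) w ^ 2 / euclNorm (p + t • w) ^ 5
        - dot w w / euclNorm (p + t • w) ^ 3) t :=
  HasDerivAt.neg_div_pow_three_of_norm (D := fun τ => dot (p + τ • w) w)
    (hasDerivAt_euclNorm_line p w h) (hasDerivAt_dot_line p w t) (euclNorm_pos h).ne'

end EuclideanPlane

section Potential

/-- `-2U`. -/
noncomputable def potential (q : ℝ × ℝ) : ℝ := 1 / euclNorm q + 1 / euclNorm (q - (1, 0))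

noncomputable def potentialDeriv (q w : ℝ × ℝ) : ℝ :=
  -(dot q w / euclNorm q ^ 3) + -(dot (q - (1, 0)) w / euclNorm (q - (1, 0)) ^ 3)

noncomputable def potentialDeriv2 (q w : ℝ × ℝ) : ℝ :=
  3 * dot q w ^ 2 / euclNorm q ^ 5 - dot w w / euclNorm q ^ 3
    + (3 * dot (q - (1, 0)) w ^ 2 / euclNorm (q - (1, 0)) ^ 5
      - dot w w / euclNorm (q - (1, 0)) ^ 3)

theorem hasDerivAt_potential_line (p w : ℝ × ℝ) {t : ℝ} (h₀ : p + t • w ≠ 0)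
    (h₁ : p + t • w - (1, 0) ≠ 0) :
    HasDerivAt (fun τ => potential (p + τ • w)) (potentialDeriv (p + t • w) w) t := by
  simp only [potential, potentialDeriv, ← sub_add_eq_add_sub] at h₁ ⊢
  exact (hasDerivAt_one_div_euclNorm_line p w h₀).fun_add
    (hasDerivAt_one_div_euclNorm_line _ w h₁)

theorem hasDerivAt_potentialDeriv_line (p w : ℝ × ℝ) {t : ℝ} (h₀ : p + t • w ≠ 0)
    (h₁ : p + t • w - (1, 0) ≠ 0) :
    HasDerivAt (fun τ => potentialDeriv (p + τ • w) w) (potentialDeriv2 (p + t • w) w) t := by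
  simp only [potentialDeriv, potentialDeriv2, ← sub_add_eq_add_sub] at h₁ ⊢
  exact (hasDerivAt_neg_dot_div_euclNorm_pow_three_line p w h₀).fun_add
    (hasDerivAt_neg_dot_div_euclNorm_pow_three_line _ w h₁)

def wedgeDisk : Set (ℝ × ℝ) :=
  {q | q ≠ 0 ∧ 2 * euclNorm q < 1 ∧ 2 * q.2 ^ 2 ≤ (1 - 2 * q.1) ^ 2}

theorem fst_lt_half_of_mem_wedgeDisk {q : ℝ × ℝ} (hq : q ∈ wedgeDisk) : q.1 < 1 / 2 := by
  nlinarith [hq.2.1, euclNorm_sq q, euclNorm_nonneg q, sq_nonneg q.2]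

theorem sub_ne_zero_of_mem_wedgeDisk {q : ℝ × ℝ} (hq : q ∈ wedgeDisk) : q - (1, 0) ≠ 0 := by
  intro h
  have h₁ := congrArg Prod.fst h
  simp only [Prod.fst_sub, Prod.fst_zero] at h₁
  linarith [fst_lt_half_of_mem_wedgeDisk hq]

theorem potentialDeriv2_neg {q w : ℝ × ℝ} (hq : q ∈ wedgeDisk) (hw : w ≠ 0)
    (hcrit : potentialDeriv q w = 0) : potentialDeriv2 q w < 0 := by
  have hs : 0 < euclNorm (q - (1, 0)) :=
    euclNorm_pos (sub_ne_zero_of_mem_wedgeDisk hq)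
  have hw' : w.1 ≠ 0 ∨ w.2 ≠ 0 := by
    by_contra! h
    exact hw (Prod.ext h.1 h.2)
  rw [potentialDeriv2, show dot w w = w.1 ^ 2 + w.2 ^ 2 by rw [dot]; ring]
  simp only [potentialDeriv, dot, Prod.fst_sub, Prod.snd_sub, sub_zero] at hcrit ⊢
  exact second_deriv_neg_of_deriv_eq_zero (euclNorm_pos hq.1) hs (euclNorm_sq q)
    (euclNorm_sub_sq q) hq.2.1 hq.2.2 hw' hcrit

theorem min_potential_le_of_line_subset_wedgeDisk {p w : ℝ × ℝ} (hw : w ≠ 0)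
    (h : ∀ τ ∈ Icc (0 : ℝ) 1, p + τ • w ∈ wedgeDisk) :
    ∀ t ∈ Icc (0 : ℝ) 1, min (potential p) (potential (p + w)) ≤ potential (p + t • w) := by
  have hg : ∀ τ ∈ Icc (0 : ℝ) 1,
      HasDerivAt (fun τ => potential (p + τ • w)) (potentialDeriv (p + τ • w) w) τ :=
    fun τ hτ => hasDerivAt_potential_line p w (h τ hτ).1 (sub_ne_zero_of_mem_wedgeDisk (h τ hτ))
  have hmin := min_le_of_second_deriv_neg_at_critical zero_le_one
    (fun τ hτ => (hg τ hτ).continuousAt.continuousWithinAt)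
    (fun τ hτ => hg τ (Ioo_subset_Icc_self hτ))
    (fun τ hτ => hasDerivAt_potentialDeriv_line p w (h τ (Ioo_subset_Icc_self hτ)).1
      (sub_ne_zero_of_mem_wedgeDisk (h τ (Ioo_subset_Icc_self hτ))))
    (fun τ hτ => potentialDeriv2_neg (h τ (Ioo_subset_Icc_self hτ)) hw)
  simpa using hmin

end Potential

section EarthRegion

/-- The Earth component for `a = -2c` together with the collision point, which needs no separate
case in this product form of `a ≤ potential q`. -/
def earthRegion (a : ℝ) : Set (ℝ × ℝ) :=
  {q | q.1 < 1 / 2 ∧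
    a * (euclNorm q * euclNorm (q - (1, 0))) ≤ euclNorm q + euclNorm (q - (1, 0))}

theorem zero_mem_earthRegion (a : ℝ) : (0 : ℝ × ℝ) ∈ earthRegion a := by
  simp [earthRegion, euclNorm_eq_sqrt]

theorem mem_earthRegion_iff_of_ne_zero {a : ℝ} {q : ℝ × ℝ} (hq : q ≠ 0) :
    q ∈ earthRegion a ↔ q.1 < 1 / 2 ∧ a ≤ potential q := by
  refine and_congr_right fun hq₁ => ?_
  have hr := euclNorm_pos hq
  have hs : 0 < euclNorm (q - (1, 0)) := by linarith [one_lt_two_mul_euclNorm_sub hq₁]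
  rw [potential, div_add_div _ _ hr.ne' hs.ne', le_div_iff₀ (by positivity)]
  ring_nf

theorem two_mul_euclNorm_lt_one_of_mem_earthRegion {a : ℝ} (ha : 4 < a) {q : ℝ × ℝ}
    (hq : q ∈ earthRegion a) : 2 * euclNorm q < 1 := by
  obtain ⟨hq₁, hq⟩ := hq
  have hs := one_lt_two_mul_euclNorm_sub hq₁
  by_contra! hr
  have h₁ : 0 < a * euclNorm (q - (1, 0)) - 2 * euclNorm (q - (1, 0)) - 1 := by nlinarith
  nlinarith [mul_pos (by linarith : 0 < euclNorm q) h₁]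

theorem wedge_of_mem_earthRegion {a : ℝ} (ha : 4 < a) {q : ℝ × ℝ} (hq : q ∈ earthRegion a) :
    2 * q.2 ^ 2 ≤ (1 - 2 * q.1) ^ 2 := by
  obtain ⟨-, hq⟩ := hq
  set r := euclNorm q
  set s := euclNorm (q - (1, 0))
  have hr := euclNorm_nonneg q
  have hs := euclNorm_nonneg (q - (1, 0))
  have hr2 := euclNorm_sq q
  have hs2 := euclNorm_sub_sq q
  have hrs := one_le_add_of_sq_eq hr hs hr2 hs2
  have h4 : 4 * (r * s) ≤ r + s := by nlinarith [mul_nonneg hr hs]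
  have hA : (0 : ℝ) ≤ (r - s) ^ 2 - ((r + s) ^ 2 - (r + s)) := by nlinarith
  have hB : (0 : ℝ) ≤ 3 * (r + s) ^ 2 - 1 := by nlinarith
  nlinarith [mul_nonneg hA hB, mul_nonneg (sq_nonneg (r + s - 1)) (by positivity :
    (0 : ℝ) ≤ 3 * (r + s) ^ 2 + 3 * (r + s) + 1)]

theorem convex_wedge : Convex ℝ {q : ℝ × ℝ | q.1 < 1 / 2 ∧ 2 * q.2 ^ 2 ≤ (1 - 2 * q.1) ^ 2} := by
  intro x ⟨hx₁, hx⟩ y ⟨hy₁, hy⟩ μ ν hμ hν hμν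
  simp only [mem_ofPred_eq, Prod.fst_add, Prod.snd_add, Prod.smul_fst, Prod.smul_snd, smul_eq_mul]
  obtain rfl : μ = 1 - ν := by linarith
  refine ⟨by nlinarith, ?_⟩
  have hX : 0 ≤ 1 - 2 * x.1 := by linarith
  have hY : 0 ≤ 1 - 2 * y.1 := by linarith
  have hXY : 2 * (x.2 * y.2) ≤ (1 - 2 * x.1) * (1 - 2 * y.1) := by
    nlinarith [mul_nonneg hX hY, sq_nonneg ((1 - 2 * x.1) * (1 - 2 * y.1) - 2 * x.2 * y.2),
      sq_nonneg ((1 - 2 * x.1) * y.2 - (1 - 2 * y.1) * x.2),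
      sq_nonneg ((1 - 2 * x.1) * y.2 + (1 - 2 * y.1) * x.2)]
  nlinarith [mul_le_mul_of_nonneg_left hx (sq_nonneg (1 - ν)),
    mul_le_mul_of_nonneg_left hy (sq_nonneg ν), mul_le_mul_of_nonneg_left hXY (mul_nonneg hμ hν)]

theorem segment_subset_wedgeDisk {a : ℝ} (ha : 4 < a) {x y : ℝ × ℝ} (hx : x ∈ earthRegion a)
    (hy : y ∈ earthRegion a) (h0 : (0 : ℝ × ℝ) ∉ segment ℝ x y) : segment ℝ x y ⊆ wedgeDisk := by
  intro q hq
  have hdisk := (convexOn_euclNorm.convex_lt (1 / 2)).segment_subset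
    ⟨trivial, by linarith [two_mul_euclNorm_lt_one_of_mem_earthRegion ha hx]⟩
    ⟨trivial, by linarith [two_mul_euclNorm_lt_one_of_mem_earthRegion ha hy]⟩ hq
  have hwedge := convex_wedge.segment_subset ⟨hx.1, wedge_of_mem_earthRegion ha hx⟩
    ⟨hy.1, wedge_of_mem_earthRegion ha hy⟩ hq
  exact ⟨fun h => h0 (h ▸ hq), by linarith [hdisk.2], hwedge.2⟩

theorem starConvex_earthRegion {a : ℝ} (ha : 4 < a) : StarConvex ℝ 0 (earthRegion a) := by
  intro q hq μ τ _ hτ hμτ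
  rw [smul_zero, zero_add]
  obtain ⟨hq₁, hqa⟩ := hq
  have hτ₁ : τ ≤ 1 := by linarith
  have hτq₁ : (τ • q).1 < 1 / 2 := by
    rw [Prod.smul_fst, smul_eq_mul]
    rcases le_or_gt q.1 0 with h | h <;> nlinarith
  have hdist : euclNorm (τ • q - (1, 0)) ≤ τ * euclNorm (q - (1, 0)) + (1 - τ) := by
    calc euclNorm (τ • q - (1, 0)) = euclNorm (τ • (q - (1, 0)) + (1 - τ) • (-1, 0)) := by
          congr 1; ext <;> simp; ring
      _ ≤ τ * euclNorm (q - (1, 0)) + (1 - τ) := by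
          refine (euclNorm_add_le _ _).trans_eq ?_
          rw [euclNorm_smul, euclNorm_smul, abs_of_nonneg hτ, abs_of_nonneg (sub_nonneg.2 hτ₁)]
          simp [euclNorm_eq_sqrt]
  refine ⟨hτq₁, ?_⟩
  rw [euclNorm_smul, abs_of_nonneg hτ]
  exact mul_mul_le_add_of_mul_le_add ha (one_lt_two_mul_euclNorm_sub hq₁).le
    (one_lt_two_mul_euclNorm_sub hτq₁).le hτ hτ₁ hdist hqa

theorem segment_subset_earthRegion {a : ℝ} (ha : 4 < a) {x y : ℝ × ℝ} (hx : x ∈ earthRegion a)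
    (hy : y ∈ earthRegion a) (h0 : (0 : ℝ × ℝ) ∉ segment ℝ x y) :
    segment ℝ x y ⊆ earthRegion a := by
  rcases eq_or_ne x y with rfl | hxy
  · simpa using hx
  have hline : ∀ τ ∈ Icc (0 : ℝ) 1, x + τ • (y - x) ∈ wedgeDisk := fun τ hτ =>
    segment_subset_wedgeDisk ha hx hy h0 (segment_eq_image' ℝ x y ▸ mem_image_of_mem _ hτ)
  have hmin := min_potential_le_of_line_subset_wedgeDisk (sub_ne_zero.2 hxy.symm) hline
  rw [add_sub_cancel] at hmin
  rw [segment_eq_image']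
  rintro _ ⟨t, ht, rfl⟩
  have hx₀ : x ≠ 0 := fun h => h0 (h ▸ left_mem_segment ℝ x y)
  have hy₀ : y ≠ 0 := fun h => h0 (h ▸ right_mem_segment ℝ x y)
  refine (mem_earthRegion_iff_of_ne_zero (hline t ht).1).2
    ⟨fst_lt_half_of_mem_wedgeDisk (hline t ht), le_trans (le_min ?_ ?_) (hmin t ht)⟩
  · exact ((mem_earthRegion_iff_of_ne_zero hx₀).1 hx).2
  · exact ((mem_earthRegion_iff_of_ne_zero hy₀).1 hy).2

theorem convex_earthRegion {a : ℝ} (ha : 4 < a) : Convex ℝ (earthRegion a) :=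
  (starConvex_earthRegion ha).convex_of_segment_subset fun _ hx _ hy h0 =>
    segment_subset_earthRegion ha hx hy h0

end EarthRegion

/-- In the equal-mass Euler problem, for every energy `c < −2` the Earth component of
the Hill region, together with the collision point, is convex. -/
theorem stmt_19 (c : ℝ) (hc : c < -2) :
    Convex ℝ
      ({((0 : ℝ), (0 : ℝ))} ∪
        {q : ℝ × ℝ | q ≠ (0, 0) ∧ q.1 < 1 / 2 ∧
          -(1 / 2) / Real.sqrt (q.1 ^ 2 + q.2 ^ 2)
            - (1 / 2) / Real.sqrt ((q.1 - 1) ^ 2 + q.2 ^ 2) ≤ c}) := by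
  convert convex_earthRegion (by linarith : 4 < -2 * c) using 1
  ext q
  rcases eq_or_ne q 0 with rfl | hq
  · simp [zero_mem_earthRegion, Prod.mk_zero_zero]
  rw [mem_earthRegion_iff_of_ne_zero hq, potential]
  simp only [Prod.mk_zero_zero, mem_union, mem_singleton_iff, hq, mem_ofPred_eq, ne_eq,
    not_false_eq_true, true_and, false_or, euclNorm_eq_sqrt, Prod.fst_sub, Prod.snd_sub, sub_zero]
  refine and_congr_right fun _ => ?_
  rw [show ∀ r s : ℝ, -(1 / 2) / r - 1 / 2 / s = -(1 / 2) * (1 / r + 1 / s) from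
    fun r s => by ring]
  constructor <;> intro h <;> linarith
end
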